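/- arXiv:2211.11184 — 4 statements merged into one kernel-verified Lean document; each statement's English description precedes it below -/
import Mathlib

section
/- Generalized extended continuous mapping theorem: Let D and E be metrizable linear topological spaces, let D_n, D_g ⊆ D and D_n^→ ⊆ D_n for all n ∈ ℕ. Suppose Borel measurable functions g_n : D_n → E and g : D_g → E satisfy: whenever h_n → h in D with h_n ∈ D_n^→ for all sufficiently large n and h ∈ D_g, then g_n(h_n) → g(h) in E. Let H_n : Ω → D_n and H : Ω → D_g be Borel measurable maps on a probability space (Ω,𝒜,ℙ) such that H_n →_w H, ℙ(H ∈ D_*) = 0 and ℙ(H ∈ D_∞) = 1, where D_∞ := {h ∈ D : there exist h_n → h with h_n ∈ D_n^→ for all sufficiently large n} and D_* := ∩_{m=1}^∞ closure(∪_{n=m}^∞ (D ∖ D_n^→)). Then g_n(H_n) →_w g(H). -/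
/-!
Write `Sₙ = {x | x ∈ Dₙ^→ → gₙ x ∈ F}` for a closed `F ⊆ E`, so that `{gₙ(Hₙ) ∈ F} ⊆ {Hₙ ∈ Sₙ}`.
The portmanteau theorem along the closed sets `closure (⋃ n ≥ m, Sₙ)` bounds
`limsup ℙ(gₙ(Hₙ) ∈ F)` by `ℙ(H ∈ S)`, where `S = ⋂ₘ closure (⋃ n ≥ m, Sₙ)` is the Kuratowski upper
limit of the `Sₙ`. A point `x ∈ S ∖ D_*` is the limit of a sequence `hₙ` with `hₙ ∈ Sₙ` infinitely
often, and `hₙ ∈ Dₙ^→` eventually because `x` has a neighbourhood inside `Dₙ^→` for large `n`;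
hence `gₙ(hₙ) → g(x)` with `gₙ(hₙ) ∈ F` infinitely often, and `g(x) ∈ F`. As `ℙ(H ∈ D_*) = 0`,
this gives `limsup ℙ(gₙ(Hₙ) ∈ F) ≤ ℙ(g(H) ∈ F)`, which is weak convergence by the portmanteau
theorem again.
-/

open MeasureTheory Filter Topology

noncomputable section

/-- Weak convergence (convergence in distribution) of random elements of a topological
space `D`: `E[f(Xₙ)] → E[f(X)]` for every bounded continuous `f : D → ℝ`. -/
def WeakConv {Ω D : Type*} [MeasurableSpace Ω] [TopologicalSpace D]
    (P : Measure Ω) (X : ℕ → Ω → D) (L : Ω → D) : Prop :=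
  ∀ f : BoundedContinuousFunction D ℝ,
    Tendsto (fun n => ∫ ω, f (X n ω) ∂P) atTop (𝓝 (∫ ω, f (L ω) ∂P))

def kuratowskiLimsup {X : Type*} [TopologicalSpace X] (T : ℕ → Set X) : Set X :=
  ⋂ m : ℕ, closure (⋃ n ∈ Set.Ici m, T n)

section Topology

variable {X : Type*} [TopologicalSpace X] {T : ℕ → Set X} {x : X}

theorem antitone_closure_biUnion_Ici (T : ℕ → Set X) :
    Antitone fun m : ℕ => closure (⋃ n ∈ Set.Ici m, T n) := fun _ _ hmm' =>
  closure_mono (Set.biUnion_subset_biUnion_left (Set.Ici_subset_Ici.mpr hmm'))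

theorem isClosed_kuratowskiLimsup (T : ℕ → Set X) : IsClosed (kuratowskiLimsup T) :=
  isClosed_iInter fun _ => isClosed_closure

theorem eventually_notMem_of_notMem_kuratowskiLimsup (hx : x ∉ kuratowskiLimsup T)
    {h : ℕ → X} (hh : Tendsto h atTop (𝓝 x)) : ∀ᶠ n in atTop, h n ∉ T n := by
  simp only [kuratowskiLimsup, Set.mem_iInter, not_forall] at hx
  obtain ⟨m, hm⟩ := hx
  filter_upwards [hh.eventually (isClosed_closure.isOpen_compl.mem_nhds hm),
    eventually_ge_atTop m] with n hn hmn hnT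
  exact hn (subset_closure (Set.mem_biUnion hmn hnT))

theorem exists_tendsto_frequently_mem_of_mem_kuratowskiLimsup [FirstCountableTopology X]
    (hx : x ∈ kuratowskiLimsup T) :
    ∃ h : ℕ → X, Tendsto h atTop (𝓝 x) ∧ ∃ᶠ n in atTop, h n ∈ T n := by
  obtain ⟨u, hu⟩ := (𝓝 x).exists_antitone_basis
  have hfreq : ∀ k, ∃ᶠ n in atTop, (u k ∩ T n).Nonempty := by
    refine fun k => frequently_atTop.mpr fun m => ?_
    obtain ⟨y, hyu, hyT⟩ :=
      mem_closure_iff_nhds.mp (Set.mem_iInter.mp hx m) (u k) (hu.mem k)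
    obtain ⟨n, hmn, hyn⟩ := Set.mem_iUnion₂.mp hyT
    exact ⟨n, hmn, y, hyu, hyn⟩
  obtain ⟨φ, hφ, hφu⟩ := extraction_forall_of_frequently hfreq
  choose y hyu hyT using hφu
  -- `y k ∈ T (φ k)` along a subsequence; off the range of `φ` the sequence is padded by `x`.
  refine ⟨Function.extend φ y fun _ => x, ?_, frequently_atTop.mpr fun m => ?_⟩
  · refine tendsto_nhds.mpr fun V hV hxV => ?_
    obtain ⟨K, hK⟩ := eventually_atTop.mp (hu.tendsto hyu (hV.mem_nhds hxV))
    filter_upwards [eventually_ge_atTop (φ K)] with n hn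
    simp only [Set.mem_preimage]
    by_cases hrange : ∃ k, φ k = n
    · obtain ⟨k, rfl⟩ := hrange
      rw [hφ.injective.extend_apply]
      exact hK k (hφ.le_iff_le.mp hn)
    · rwa [Function.extend_apply' _ _ _ hrange]
  · exact ⟨φ m, hφ.id_le m, by rw [hφ.injective.extend_apply]; exact hyT m⟩

theorem mem_of_mem_kuratowskiLimsup_of_tendsto {Y : Type*} [TopologicalSpace Y]
    [FirstCountableTopology X] {A : ℕ → Set X} {g : ℕ → X → Y} {y : Y} {F : Set Y}
    (hF : IsClosed F)
    (hg : ∀ h : ℕ → X, (∀ᶠ n in atTop, h n ∈ A n) → Tendsto h atTop (𝓝 x) →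
      Tendsto (fun n => g n (h n)) atTop (𝓝 y))
    (hx : x ∈ kuratowskiLimsup fun n => {z | z ∈ A n → g n z ∈ F})
    (hxA : x ∉ kuratowskiLimsup fun n => (A n)ᶜ) : y ∈ F := by
  obtain ⟨h, hhx, hhF⟩ := exists_tendsto_frequently_mem_of_mem_kuratowskiLimsup hx
  have hhA : ∀ᶠ n in atTop, h n ∈ A n := by
    simpa using eventually_notMem_of_notMem_kuratowskiLimsup hxA hhx
  refine hF.mem_of_frequently_of_tendsto ?_ (hg h hhA hhx)
  exact (hhF.and_eventually hhA).mono fun n hn => hn.1 hn.2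

end Topology

namespace MeasureTheory

variable {Ω Ω' E : Type*} [MeasurableSpace Ω] [MeasurableSpace Ω'] [TopologicalSpace E]
  [MeasurableSpace E] [OpensMeasurableSpace E]

theorem weakConv_iff_tendstoInDistribution {P : Measure Ω} [IsProbabilityMeasure P]
    {X : ℕ → Ω → E} {L : Ω → E} (hX : ∀ n, AEMeasurable (X n) P) (hL : AEMeasurable L P) :
    WeakConv P X L ↔ TendstoInDistribution X atTop L (fun _ => P) P := by
  refine ⟨fun h => ⟨hX, hL, ?_⟩, fun h f => ?_⟩
  · refine ProbabilityMeasure.tendsto_iff_forall_integral_tendsto.mpr fun f => ?_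
    simpa [integral_map, hX, hL, f.continuous.aestronglyMeasurable] using h f
  · have := ProbabilityMeasure.tendsto_iff_forall_integral_tendsto.mp h.tendsto f
    simpa [integral_map, hX, hL, f.continuous.aestronglyMeasurable] using this

theorem ProbabilityMeasure.limsup_measure_le_kuratowskiLimsup_of_tendsto
    [HasOuterApproxClosed E] {μ : ProbabilityMeasure E} {μs : ℕ → ProbabilityMeasure E}
    (hμs : Tendsto μs atTop (𝓝 μ)) (S : ℕ → Set E) :
    limsup (fun n => (μs n : Measure E) (S n)) atTop ≤ (μ : Measure E) (kuratowskiLimsup S) := by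
  have hA : ∀ m : ℕ, limsup (fun n => (μs n : Measure E) (S n)) atTop ≤
      (μ : Measure E) (closure (⋃ n ∈ Set.Ici m, S n)) := fun m =>
    calc limsup (fun n => (μs n : Measure E) (S n)) atTop
        ≤ limsup (fun n => (μs n : Measure E) (closure (⋃ n ∈ Set.Ici m, S n))) atTop := by
          refine limsup_le_limsup ?_
          filter_upwards [eventually_ge_atTop m] with n hn
          exact measure_mono (subset_closure.trans' (Set.subset_biUnion_of_mem (u := S) hn))
      _ ≤ _ := ProbabilityMeasure.limsup_measure_closed_le_of_tendsto hμs isClosed_closure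
  rw [kuratowskiLimsup, (antitone_closure_biUnion_Ici S).measure_iInter
    (fun _ => isClosed_closure.measurableSet.nullMeasurableSet) ⟨0, measure_ne_top _ _⟩]
  exact le_iInf hA

variable {μ : Measure Ω} [IsProbabilityMeasure μ] {μ' : Measure Ω'} [IsProbabilityMeasure μ']
  {X : ℕ → Ω → E} {L : Ω' → E}

theorem TendstoInDistribution.limsup_measure_preimage_le_kuratowskiLimsup
    [HasOuterApproxClosed E] (h : TendstoInDistribution X atTop L (fun _ => μ) μ')
    (S : ℕ → Set E) :
    limsup (fun n => μ (X n ⁻¹' S n)) atTop ≤ μ' (L ⁻¹' kuratowskiLimsup S) := by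
  rw [← Measure.map_apply_of_aemeasurable h.aemeasurable_limit
    (isClosed_kuratowskiLimsup S).measurableSet]
  calc limsup (fun n => μ (X n ⁻¹' S n)) atTop
      ≤ limsup (fun n => μ.map (X n) (S n)) atTop := limsup_le_limsup
        (Eventually.of_forall fun n => Measure.le_map_apply (h.forall_aemeasurable n) _)
    _ ≤ μ'.map L (kuratowskiLimsup S) :=
        ProbabilityMeasure.limsup_measure_le_kuratowskiLimsup_of_tendsto h.tendsto S

theorem tendstoInDistribution_of_forall_isClosed_limsup_le (hX : ∀ n, AEMeasurable (X n) μ)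
    (hL : AEMeasurable L μ')
    (h : ∀ F, IsClosed F → limsup (fun n => μ (X n ⁻¹' F)) atTop ≤ μ' (L ⁻¹' F)) :
    TendstoInDistribution X atTop L (fun _ => μ) μ' where
  forall_aemeasurable := hX
  aemeasurable_limit := hL
  tendsto := tendsto_of_forall_isClosed_limsup_le' fun F hF => by
    simpa [Measure.map_apply_of_aemeasurable, hX, hL, hF.measurableSet] using h F hF

end MeasureTheory

theorem generalized_extended_continuous_mapping_general
    {D E : Type*}
    -- D and E are metrizable linear topological spaces
    [TopologicalSpace D] [TopologicalSpace.MetrizableSpace D]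
    [MeasurableSpace D] [BorelSpace D]
    [TopologicalSpace E]
    [MeasurableSpace E] [BorelSpace E]
    {Ω : Type*} [MeasurableSpace Ω] (P : Measure Ω) [IsProbabilityMeasure P]
    -- the sets Dₙ, D_g ⊆ D and Dₙ^→ ⊆ Dₙ
    (Dn : ℕ → Set D) (Dg : Set D) (Dnarr : ℕ → Set D)
    -- Borel measurable functions gₙ : Dₙ → E and g : D_g → E
    (g : ℕ → D → E) (gl : D → E)
    (hgmeas : ∀ n, Measurable ((Dn n).restrict (g n)))
    (hglmeas : Measurable (Dg.restrict gl))
    -- the continuity condition along sequences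
    (hconv : ∀ (h : ℕ → D) (x : D), x ∈ Dg →
      (∀ᶠ n in atTop, h n ∈ Dnarr n) → Tendsto h atTop (𝓝 x) →
      Tendsto (fun n => g n (h n)) atTop (𝓝 (gl x)))
    -- Borel measurable maps Hₙ : Ω → Dₙ and H : Ω → D_g
    (H : ℕ → Ω → D) (Hl : Ω → D)
    (hHval : ∀ n ω, H n ω ∈ Dn n) (hHlval : ∀ ω, Hl ω ∈ Dg)
    (hHmeas : ∀ n, Measurable (H n)) (hHlmeas : Measurable Hl)
    (hW : WeakConv P H Hl)
    -- ℙ(H ∈ D_*) = 0 and ℙ(H ∈ D_∞) = 1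
    (hstar : P {ω | Hl ω ∈ ⋂ m : ℕ, closure (⋃ n ∈ Set.Ici m, (Dnarr n)ᶜ)} = 0) :
    WeakConv P (fun n ω => g n (H n ω)) (fun ω => gl (Hl ω)) := by
  have hgH : ∀ n, Measurable fun ω => g n (H n ω) := fun n =>
    (hgmeas n).comp ((hHmeas n).subtype_mk (h := hHval n))
  have hglHl : Measurable fun ω => gl (Hl ω) := hglmeas.comp (hHlmeas.subtype_mk (h := hHlval))
  have hHdist := (weakConv_iff_tendstoInDistribution (fun n => (hHmeas n).aemeasurable)
    hHlmeas.aemeasurable).mp hW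
  refine (weakConv_iff_tendstoInDistribution (fun n => (hgH n).aemeasurable)
    hglHl.aemeasurable).mpr <| tendstoInDistribution_of_forall_isClosed_limsup_le
    (fun n => (hgH n).aemeasurable) hglHl.aemeasurable fun F hF => ?_
  calc limsup (fun n => P ((fun ω => g n (H n ω)) ⁻¹' F)) atTop
      ≤ limsup (fun n => P (H n ⁻¹' {x | x ∈ Dnarr n → g n x ∈ F})) atTop :=
        limsup_le_limsup (Eventually.of_forall fun n => measure_mono fun ω hω _ => hω)
    _ ≤ P (Hl ⁻¹' kuratowskiLimsup fun n => {x | x ∈ Dnarr n → g n x ∈ F}) :=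
        hHdist.limsup_measure_preimage_le_kuratowskiLimsup _
    _ ≤ P ((fun ω => gl (Hl ω)) ⁻¹' F) := measure_mono_ae <|
        (measure_eq_zero_iff_ae_notMem.mp hstar).mono fun ω hstarω hω =>
          mem_of_mem_kuratowskiLimsup_of_tendsto hF (hconv · (Hl ω) (hHlval ω)) hω hstarω

/-- Generalized extended continuous mapping theorem: if `gₙ(hₙ) → g(h)` along sequences
`hₙ → h` with `hₙ ∈ Dₙ^→` eventually and `h ∈ D_g`, `Hₙ →_w H`, `ℙ(H ∈ D_*) = 0` and
`ℙ(H ∈ D_∞) = 1`, then `gₙ(Hₙ) →_w g(H)`. -/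
theorem generalized_extended_continuous_mapping
    {D E : Type*}
    -- D and E are metrizable linear topological spaces
    [TopologicalSpace D] [AddCommGroup D] [Module ℝ D] [IsTopologicalAddGroup D]
    [ContinuousSMul ℝ D] [TopologicalSpace.MetrizableSpace D]
    [MeasurableSpace D] [BorelSpace D]
    [TopologicalSpace E] [AddCommGroup E] [Module ℝ E] [IsTopologicalAddGroup E]
    [ContinuousSMul ℝ E] [TopologicalSpace.MetrizableSpace E]
    [MeasurableSpace E] [BorelSpace E]
    {Ω : Type*} [MeasurableSpace Ω] (P : Measure Ω) [IsProbabilityMeasure P]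
    -- the sets Dₙ, D_g ⊆ D and Dₙ^→ ⊆ Dₙ
    (Dn : ℕ → Set D) (Dg : Set D) (Dnarr : ℕ → Set D)
    (hDnarr : ∀ n, Dnarr n ⊆ Dn n)
    -- Borel measurable functions gₙ : Dₙ → E and g : D_g → E
    (g : ℕ → D → E) (gl : D → E)
    (hgmeas : ∀ n, Measurable ((Dn n).restrict (g n)))
    (hglmeas : Measurable (Dg.restrict gl))
    -- the continuity condition along sequences
    (hconv : ∀ (h : ℕ → D) (x : D), x ∈ Dg →
      (∀ᶠ n in atTop, h n ∈ Dnarr n) → Tendsto h atTop (𝓝 x) →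
      Tendsto (fun n => g n (h n)) atTop (𝓝 (gl x)))
    -- Borel measurable maps Hₙ : Ω → Dₙ and H : Ω → D_g
    (H : ℕ → Ω → D) (Hl : Ω → D)
    (hHval : ∀ n ω, H n ω ∈ Dn n) (hHlval : ∀ ω, Hl ω ∈ Dg)
    (hHmeas : ∀ n, Measurable (H n)) (hHlmeas : Measurable Hl)
    (hW : WeakConv P H Hl)
    -- ℙ(H ∈ D_*) = 0 and ℙ(H ∈ D_∞) = 1
    (hstar : P {ω | Hl ω ∈ ⋂ m : ℕ, closure (⋃ n ∈ Set.Ici m, (Dnarr n)ᶜ)} = 0)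
    (hinfty : P {ω | Hl ω ∈ {x : D | ∃ h : ℕ → D,
      Tendsto h atTop (𝓝 x) ∧ ∀ᶠ n in atTop, h n ∈ Dnarr n}} = 1) :
    WeakConv P (fun n ω => g n (H n ω)) (fun ω => gl (Hl ω)) :=
  generalized_extended_continuous_mapping_general P Dn Dg Dnarr g gl hgmeas hglmeas hconv H Hl hHval
    hHlval hHmeas hHlmeas hW hstar
end
end

section
/- One-sample limit distribution for χ² divergence under the alternative: Let ν be a probability measure on (S,𝒮), μ ≪ ν a probability measure with density p_μ and χ²(μ‖ν) < ∞, and (μ_n) random probability measures with, almost surely, μ_n ≪ ν with density p_{μ_n} and χ²(μ_n‖ν) < ∞ for all n sufficiently large. Let r_n → ∞. If the L²(ν)-valued random elements r_n(p_{μ_n} − p_μ) converge weakly to a random element B of L²(ν), then r_n(χ²(μ_n‖ν) − χ²(μ‖ν)) converges in distribution to 2∫_S B dμ = 2∫_S B·p_μ dν. -/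
/-!
Since `p_{μₙ} = p_μ + Zₙ / rₙ` and both densities integrate to one, `∫ Zₙ = 0`; expanding the
square then gives the exact identity `rₙ (χ²(μₙ‖ν) - χ²(μ‖ν)) = 2 ∫ Zₙ p_μ + ‖Zₙ‖² / rₙ`.
The map `z ↦ ∫ z p_μ` is a bounded linear functional (Cauchy–Schwarz, as `p_μ - 1 ∈ L²(ν)`), so by
Riesz it is `⟪ψ, ·⟫`; the continuous mapping theorem and Slutsky's lemma (with `1 / rₙ → 0`) give
`2 ⟪ψ, Zₙ⟫ + ‖Zₙ‖² / rₙ → 2 ⟪ψ, B⟫` in distribution.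

As `p_μ` need not be measurable, `∫ z p_μ` is only meaningful on the closed subspace of those `z`
with `z p_μ` a.e. measurable; `Zₙ` eventually lies there, hence so does `B` almost surely, which
identifies the limit as `2 ∫ B p_μ`.
-/

open MeasureTheory Filter Topology

noncomputable section

open scoped ENNReal

section WeakConv

variable {Ω D E : Type*} [MeasurableSpace Ω] {P : Measure Ω} [IsProbabilityMeasure P]

theorem WeakConv.tendstoInDistribution_comp [TopologicalSpace D] [TopologicalSpace E]
    [MeasurableSpace E] [OpensMeasurableSpace E] {X : ℕ → Ω → D} {L : Ω → D}
    (hW : WeakConv P X L) {F : D → E} (hF : Continuous F) (hX : ∀ n, AEMeasurable (F ∘ X n) P)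
    (hL : AEMeasurable (F ∘ L) P) :
    TendstoInDistribution (fun n => F ∘ X n) atTop (F ∘ L) (fun _ => P) P where
  forall_aemeasurable := hX
  aemeasurable_limit := hL
  tendsto := by
    refine ProbabilityMeasure.tendsto_iff_forall_integral_tendsto.2 fun f => ?_
    simp only [ProbabilityMeasure.coe_mk]
    rw [integral_map hL f.continuous.aestronglyMeasurable]
    simp_rw [integral_map (hX _) f.continuous.aestronglyMeasurable]
    exact hW (f.compContinuous ⟨F, hF⟩)

theorem MeasureTheory.TendstoInDistribution.weakConv [TopologicalSpace E] [MeasurableSpace E]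
    [OpensMeasurableSpace E] {Y : ℕ → Ω → E} {M : Ω → E}
    (h : TendstoInDistribution Y atTop M (fun _ => P) P) : WeakConv P Y M := by
  intro f
  have := ProbabilityMeasure.tendsto_iff_forall_integral_tendsto.1 h.tendsto f
  simp only [ProbabilityMeasure.coe_mk] at this
  rw [integral_map h.aemeasurable_limit f.continuous.aestronglyMeasurable] at this
  simp_rw [integral_map (h.forall_aemeasurable _) f.continuous.aestronglyMeasurable] at this
  exact this

theorem MeasureTheory.TendstoInDistribution.of_ae_eventually_eq [SeminormedAddCommGroup E]
    [SecondCountableTopology E] [MeasurableSpace E] [BorelSpace E] {X Y : ℕ → Ω → E}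
    {L : Ω → E} (h : TendstoInDistribution X atTop L (fun _ => P) P)
    (hY : ∀ n, AEMeasurable (Y n) P) (hXY : ∀ᵐ ω ∂P, ∀ᶠ n in atTop, X n ω = Y n ω) :
    TendstoInDistribution Y atTop L (fun _ => P) P := by
  refine tendstoInDistribution_of_tendstoInMeasure_sub Y L h
    (tendstoInMeasure_of_tendsto_ae
      (fun n => ((hY n).sub (h.forall_aemeasurable n)).aestronglyMeasurable) ?_) hY
  filter_upwards [hXY] with ω hω
  refine tendsto_const_nhds.congr' ?_
  filter_upwards [hω] with n hn
  simp [hn]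

theorem WeakConv.tendstoInDistribution_add_mul [TopologicalSpace D] {X : ℕ → Ω → D}
    {L : Ω → D} (hW : WeakConv P X L) (hX : ∀ n, AEStronglyMeasurable (X n) P)
    (hL : AEStronglyMeasurable L P) {φ ρ : D → ℝ} (hφ : Continuous φ) (hρ : Continuous ρ)
    {ε : ℕ → ℝ} (hε : Tendsto ε atTop (𝓝 0)) :
    TendstoInDistribution (fun n ω => φ (X n ω) + ε n * ρ (X n ω)) atTop (fun ω => φ (L ω))
      (fun _ => P) P := by
  have hF : Continuous fun x => (φ x, ρ x) := hφ.prodMk hρ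
  have hpair := hW.tendstoInDistribution_comp hF
    (fun n => (hF.comp_aestronglyMeasurable (hX n)).aemeasurable)
    (hF.comp_aestronglyMeasurable hL).aemeasurable
  have hε' : TendstoInMeasure P (fun n (_ : Ω) => ε n) atTop fun _ => 0 :=
    tendstoInMeasure_of_tendsto_ae (fun _ => aestronglyMeasurable_const) (ae_of_all _ fun _ => hε)
  simpa using hpair.continuous_comp_prodMk_of_tendstoInMeasure_const
    (g := fun x : (ℝ × ℝ) × ℝ => x.1.1 + x.2 * x.1.2) (by fun_prop) hε'
    (fun _ => aemeasurable_const)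

theorem WeakConv.ae_mem_of_ae_eventually_mem [PseudoMetricSpace D] {X : ℕ → Ω → D} {L : Ω → D}
    (hW : WeakConv P X L) (hX : ∀ n, AEStronglyMeasurable (X n) P) (hL : AEStronglyMeasurable L P)
    {F : Set D} (hF : IsClosed F) (h : ∀ᵐ ω ∂P, ∀ᶠ n in atTop, X n ω ∈ F) :
    ∀ᵐ ω ∂P, L ω ∈ F := by
  obtain ⟨_, hω⟩ := h.exists
  have hne : F.Nonempty := let ⟨_, hn⟩ := hω.exists; ⟨_, hn⟩
  let d : BoundedContinuousFunction D ℝ := BoundedContinuousFunction.ofNormedAddCommGroup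
    (fun x => min (Metric.infDist x F) 1) (by fun_prop) 1
    (fun x => by
      rw [Real.norm_eq_abs, abs_of_nonneg (le_min Metric.infDist_nonneg zero_le_one)]
      exact min_le_right _ _)
  have hd_nonneg (x : D) : 0 ≤ d x := le_min Metric.infDist_nonneg zero_le_one
  have hd_le (x : D) : ‖d x‖ ≤ 1 := by
    rw [Real.norm_of_nonneg (hd_nonneg x)]
    exact min_le_right _ _
  have hXd : Tendsto (fun n => ∫ ω, d (X n ω) ∂P) atTop (𝓝 0) := by
    rw [← integral_zero Ω ℝ]
    refine tendsto_integral_of_dominated_convergence (fun _ => 1)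
      (fun n => d.continuous.comp_aestronglyMeasurable (hX n)) (integrable_const 1)
      (fun n => .of_forall fun ω => hd_le _) ?_
    filter_upwards [h] with ω hω
    refine tendsto_const_nhds.congr' ?_
    filter_upwards [hω] with n hn
    simp [d, Metric.infDist_zero_of_mem hn]
  have hLd : ∫ ω, d (L ω) ∂P = 0 := tendsto_nhds_unique (hW d) hXd
  have hint : Integrable (fun ω => d (L ω)) P :=
    (integrable_const 1).mono' (d.continuous.comp_aestronglyMeasurable hL)
      (.of_forall fun _ => hd_le _)
  filter_upwards [(integral_eq_zero_iff_of_nonneg (fun ω => hd_nonneg (L ω)) hint).1 hLd]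
    with ω hω
  rw [← hF.closure_eq, Metric.mem_closure_iff_infDist_zero hne]
  refine le_antisymm ((min_le_iff.1 hω.le).resolve_right ?_) Metric.infDist_nonneg
  norm_num

end WeakConv

section MulMeasurable

variable {S : Type*} [MeasurableSpace S] {ν : Measure S}

theorem MeasureTheory.L2.norm_sq_eq_integral_sq (z : Lp ℝ 2 ν) : ‖z‖ ^ 2 = ∫ s, z s ^ 2 ∂ν := by
  rw [← real_inner_self_eq_norm_sq, L2.inner_def]
  simp only [real_inner_self_eq_norm_sq, Real.norm_eq_abs, sq_abs]

def mulMeasurableSubmodule (f : S → ℝ) (p : ℝ≥0∞) (ν : Measure S) : Submodule ℝ (Lp ℝ p ν) where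
  carrier := {z | AEStronglyMeasurable (fun s => z s * f s) ν}
  add_mem' {a b} ha hb := (ha.add hb).congr <| by
    filter_upwards [Lp.coeFn_add a b] with s hs
    simp only [hs, Pi.add_apply, add_mul]
  zero_mem' := (aestronglyMeasurable_const (b := 0)).congr <| by
    filter_upwards [Lp.coeFn_zero ℝ p ν] with s hs
    rw [hs, Pi.zero_apply, zero_mul]
  smul_mem' t a ha := (ha.const_mul t).congr <| by
    filter_upwards [Lp.coeFn_smul t a] with s hs
    simp only [hs, Pi.smul_apply, smul_eq_mul]
    ring

variable {f : S → ℝ} {p : ℝ≥0∞}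

theorem mem_mulMeasurableSubmodule {z : Lp ℝ p ν} :
    z ∈ mulMeasurableSubmodule f p ν ↔ AEStronglyMeasurable (fun s => z s * f s) ν :=
  .rfl

theorem mulMeasurableSubmodule_sub_const (f : S → ℝ) (a : ℝ) (p : ℝ≥0∞) :
    mulMeasurableSubmodule (fun s => f s - a) p ν = mulMeasurableSubmodule f p ν := by
  ext z
  have hza := (Lp.aestronglyMeasurable z).mul_const a
  simp only [mem_mulMeasurableSubmodule, mul_sub]
  refine ⟨fun h => (h.add hza).congr (.of_forall fun s => ?_), fun h => h.sub hza⟩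
  simp

theorem isClosed_mulMeasurableSubmodule [Fact (1 ≤ p)] :
    IsClosed (mulMeasurableSubmodule f p ν : Set (Lp ℝ p ν)) := by
  refine IsSeqClosed.isClosed fun zs z hzs hz => ?_
  have hz' : TendstoInMeasure ν (fun n => (zs n : S → ℝ)) atTop z := by
    refine tendstoInMeasure_of_tendsto_eLpNorm (one_pos.trans_le (Fact.out : 1 ≤ p)).ne'
      (fun n => Lp.aestronglyMeasurable _) (Lp.aestronglyMeasurable _) ?_
    simpa only [Lp.edist_def] using (tendsto_iff_edist_tendsto_0.1 hz)
  obtain ⟨ns, -, hae⟩ := hz'.exists_seq_tendsto_ae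
  refine aestronglyMeasurable_of_tendsto_ae atTop (fun i => hzs (ns i)) ?_
  filter_upwards [hae] with s hs
  exact hs.mul_const (f s)

theorem integrable_mul_of_mem_mulMeasurableSubmodule (hf : Integrable (fun s => f s ^ 2) ν)
    {z : Lp ℝ 2 ν} (hz : z ∈ mulMeasurableSubmodule f 2 ν) :
    Integrable (fun s => z s * f s) ν := by
  have hz2 : Integrable (fun s => z s ^ 2) ν :=
    (memLp_two_iff_integrable_sq (Lp.aestronglyMeasurable z)).1 (Lp.memLp z)
  refine ((hf.add hz2).div_const 2).mono' hz (.of_forall fun s => ?_)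
  rw [Pi.add_apply, Real.norm_eq_abs, abs_le]
  constructor <;> nlinarith [sq_nonneg (f s - z s), sq_nonneg (f s + z s)]

theorem norm_integral_mul_le (hf : MemLp (fun s => |f s|) 2 ν) (z : Lp ℝ 2 ν) :
    ‖∫ s, z s * f s ∂ν‖ ≤ ‖hf.toLp‖ * ‖z‖ := by
  have hz : MemLp (fun s => |z s|) 2 ν := (Lp.memLp z).abs
  calc ‖∫ s, z s * f s ∂ν‖ ≤ ∫ s, |z s| * |f s| ∂ν := by
        simpa only [Real.norm_eq_abs, abs_mul] using
          norm_integral_le_integral_norm (fun s => z s * f s)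
    _ = inner ℝ hf.toLp hz.toLp := by
        rw [L2.inner_def]
        refine integral_congr_ae ?_
        filter_upwards [hf.coeFn_toLp, hz.coeFn_toLp] with s hfs hzs
        simp [hfs, hzs, mul_comm]
    _ ≤ ‖hf.toLp‖ * ‖hz.toLp‖ := real_inner_le_norm _ _
    _ = ‖hf.toLp‖ * ‖z‖ := by
        rw [Lp.norm_toLp _ hz, Lp.norm_def z]
        simpa only [Real.norm_eq_abs] using
          congrArg (‖hf.toLp‖ * ENNReal.toReal ·) (eLpNorm_norm (z : S → ℝ) (p := 2) (μ := ν))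

theorem memLp_abs_of_integrable_sq (hf : Integrable (fun s => f s ^ 2) ν) :
    MemLp (fun s => |f s|) 2 ν := by
  have hm : AEStronglyMeasurable (fun s => |f s|) ν := by
    simpa only [Real.sqrt_sq_eq_abs] using Real.continuous_sqrt.comp_aestronglyMeasurable hf.1
  exact (memLp_two_iff_integrable_sq hm).2 (by simpa only [sq_abs] using hf)

theorem exists_inner_eq_integral_mul (hf : Integrable (fun s => f s ^ 2) ν) :
    ∃ g : Lp ℝ 2 ν, ∀ z ∈ mulMeasurableSubmodule f 2 ν,
      inner ℝ g z = ∫ s, z s * f s ∂ν := by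
  set V := mulMeasurableSubmodule f 2 ν
  have : CompleteSpace V := isClosed_mulMeasurableSubmodule.completeSpace_coe
  have hint (z : V) := integrable_mul_of_mem_mulMeasurableSubmodule hf z.2
  let ℓ : V →ₗ[ℝ] ℝ :=
    { toFun z := ∫ s, (z : Lp ℝ 2 ν) s * f s ∂ν
      map_add' a b := by
        rw [← integral_add (hint a) (hint b)]
        refine integral_congr_ae ?_
        filter_upwards [Lp.coeFn_add (a : Lp ℝ 2 ν) b] with s hs
        simp only [Submodule.coe_add, hs, Pi.add_apply, add_mul]
      map_smul' t a := by
        rw [RingHom.id_apply, smul_eq_mul, ← integral_const_mul]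
        refine integral_congr_ae ?_
        filter_upwards [Lp.coeFn_smul t (a : Lp ℝ 2 ν)] with s hs
        simp only [Submodule.coe_smul, hs, Pi.smul_apply, smul_eq_mul]
        ring }
  let φ := ℓ.mkContinuous _ fun z => norm_integral_mul_le (memLp_abs_of_integrable_sq hf) z
  refine ⟨(InnerProductSpace.toDual ℝ V).symm φ, fun z hz => ?_⟩
  rw [← Submodule.coe_mk z hz, ← Submodule.coe_inner, InnerProductSpace.toDual_symm_apply]
  rfl

theorem exists_inner_eq_integral_mul_of_integrable_sub_sq [IsFiniteMeasure ν] {f : S → ℝ}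
    (a : ℝ) (hf : Integrable (fun s => (f s - a) ^ 2) ν) :
    ∃ g : Lp ℝ 2 ν, ∀ z ∈ mulMeasurableSubmodule f 2 ν,
      inner ℝ g z = ∫ s, z s * f s ∂ν := by
  obtain ⟨g, hg⟩ := exists_inner_eq_integral_mul hf
  refine ⟨g + (memLp_const a).toLp, fun z hz => ?_⟩
  rw [← mulMeasurableSubmodule_sub_const f a] at hz
  have hconst : inner ℝ ((memLp_const a).toLp : Lp ℝ 2 ν) z = ∫ s, z s * a ∂ν := by
    rw [L2.inner_def]
    refine integral_congr_ae ?_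
    filter_upwards [(memLp_const a).coeFn_toLp (μ := ν)] with s hs
    rw [hs, RCLike.inner_apply, conj_trivial, mul_comm]
  rw [inner_add_left, hg z hz, hconst, ← integral_add
    (integrable_mul_of_mem_mulMeasurableSubmodule hf hz)
    (((Lp.memLp z).integrable one_le_two).mul_const a)]
  simp only [← mul_add, sub_add_cancel]

end MulMeasurable

section ChiSq

variable {S : Type*} [MeasurableSpace S] {ν : Measure S}

theorem mem_mulMeasurableSubmodule_of_integrable_add_div_sq {q : S → ℝ}
    (hq : AEStronglyMeasurable (fun s => q s ^ 2) ν) {z : Lp ℝ 2 ν} {t : ℝ} (ht : t ≠ 0)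
    (h : Integrable (fun s => (q s + z s / t) ^ 2) ν) : z ∈ mulMeasurableSubmodule q 2 ν := by
  have hzt : AEStronglyMeasurable (fun s => (z s / t) ^ 2) ν := by fun_prop
  refine (((h.1.sub hq).sub hzt).const_mul (t / 2)).congr (.of_forall fun s => ?_)
  simp only [Pi.sub_apply]
  field_simp
  ring

theorem integral_add_div_sq {q : S → ℝ} (hq : Integrable (fun s => q s ^ 2) ν) {z : Lp ℝ 2 ν}
    (hz : z ∈ mulMeasurableSubmodule q 2 ν) (t : ℝ) :
    ∫ s, (q s + z s / t) ^ 2 ∂ν = ∫ s, q s ^ 2 ∂ν + 2 * (∫ s, z s * q s ∂ν) / t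
      + ‖z‖ ^ 2 / t ^ 2 := by
  have hzq := (integrable_mul_of_mem_mulMeasurableSubmodule hq hz).const_mul (2 / t)
  have hz2 := ((memLp_two_iff_integrable_sq (Lp.aestronglyMeasurable z)).1 (Lp.memLp z)).const_mul
    (t ^ 2)⁻¹
  calc ∫ s, (q s + z s / t) ^ 2 ∂ν
      = ∫ s, (q s ^ 2 + 2 / t * (z s * q s) + (t ^ 2)⁻¹ * z s ^ 2) ∂ν := by
        congr 1 with s
        ring
    _ = ∫ s, q s ^ 2 ∂ν + 2 / t * (∫ s, z s * q s ∂ν) + (t ^ 2)⁻¹ * ∫ s, z s ^ 2 ∂ν := by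
        have h12 : Integrable (fun s => q s ^ 2 + 2 / t * (z s * q s)) ν := hq.add hzq
        rw [integral_add h12 hz2, integral_add hq hzq, integral_const_mul,
          integral_const_mul]
    _ = _ := by
        rw [L2.norm_sq_eq_integral_sq]
        ring

theorem measurable_integral_add_div_sq [MeasurableSpace (Lp ℝ 2 ν)] [BorelSpace (Lp ℝ 2 ν)]
    {q : S → ℝ} (hq : Integrable (fun s => q s ^ 2) ν) (t : ℝ) :
    Measurable fun z : Lp ℝ 2 ν => ∫ s, (q s + z s / t) ^ 2 ∂ν := by
  classical
  rcases eq_or_ne t 0 with rfl | ht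
  · simp only [div_zero, add_zero, measurable_const]
  obtain ⟨g, hg⟩ := exists_inner_eq_integral_mul hq
  set V := mulMeasurableSubmodule q 2 ν
  -- off `V` the integrand is not integrable, so the integral is `0`
  have hpiece : (fun z : Lp ℝ 2 ν => ∫ s, (q s + z s / t) ^ 2 ∂ν) = (V : Set (Lp ℝ 2 ν)).piecewise
      (fun z => ∫ s, q s ^ 2 ∂ν + 2 * inner ℝ g z / t + ‖z‖ ^ 2 / t ^ 2) 0 := by
    ext z
    by_cases hz : z ∈ V
    · rw [Set.piecewise_eq_of_mem _ _ _ hz, integral_add_div_sq hq hz, hg z hz]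
    · rw [Set.piecewise_eq_of_notMem _ _ _ hz, Pi.zero_apply, integral_undef fun h =>
        hz (mem_mulMeasurableSubmodule_of_integrable_add_div_sq hq.1 ht h)]
  rw [hpiece]
  exact Measurable.piecewise isClosed_mulMeasurableSubmodule.measurableSet
    (Continuous.measurable (by fun_prop)) measurable_const

theorem integral_eq_zero_of_lintegral_ofReal_add_eq {f w : S → ℝ} (hf : ∀ᵐ s ∂ν, 0 ≤ f s)
    (hfw : ∀ᵐ s ∂ν, 0 ≤ f s + w s) (hw : Integrable w ν)
    (h : ∫⁻ s, ENNReal.ofReal (f s + w s) ∂ν = ∫⁻ s, ENNReal.ofReal (f s) ∂ν)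
    (hfin : ∫⁻ s, ENNReal.ofReal (f s) ∂ν ≠ ∞) : ∫ s, w s ∂ν = 0 := by
  have hsplit : ∀ᵐ s ∂ν, ENNReal.ofReal (f s + w s) + ENNReal.ofReal (-w s)
      = ENNReal.ofReal (f s) + ENNReal.ofReal (w s) := by
    filter_upwards [hf, hfw] with s hfs hfws
    rcases le_total 0 (w s) with hws | hws
    · rw [ENNReal.ofReal_of_nonpos (neg_nonpos.2 hws), ENNReal.ofReal_add hfs hws, add_zero]
    · rw [ENNReal.ofReal_of_nonpos hws, ← ENNReal.ofReal_add hfws (neg_nonneg.2 hws),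
        add_neg_cancel_right, add_zero]
  have hmeas {v : S → ℝ} (hv : Integrable v ν) : AEMeasurable (fun s => ENNReal.ofReal (v s)) ν :=
    ENNReal.measurable_ofReal.comp_aemeasurable hv.aemeasurable
  have hpm := lintegral_congr_ae hsplit
  rw [lintegral_add_right' _ (hmeas (v := fun s => -w s) hw.neg), lintegral_add_right' _ (hmeas hw),
    h] at hpm
  rw [integral_eq_lintegral_pos_part_sub_lintegral_neg_part hw,
    (ENNReal.add_right_inj hfin).1 hpm, sub_self]

theorem lintegral_ofReal_eq_one_of_eq_withDensity {μ : Measure S} [IsProbabilityMeasure μ]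
    {f : S → ℝ} (h : μ = ν.withDensity fun s => ENNReal.ofReal (f s)) :
    ∫⁻ s, ENNReal.ofReal (f s) ∂ν = 1 := by
  simpa [h] using measure_univ (μ := μ)

def chiSq (ν : Measure S) (p : S → ℝ) : ℝ := ∫ s, (p s - 1) ^ 2 ∂ν

theorem chiSq_eq_integral_add_div_sq {f p : S → ℝ} {t : ℝ} (ht : t ≠ 0) {z : Lp ℝ 2 ν}
    (hz : z =ᵐ[ν] fun s => t * (p s - f s)) :
    chiSq ν p = ∫ s, (f s - 1 + z s / t) ^ 2 ∂ν := by
  refine integral_congr_ae ?_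
  filter_upwards [hz] with s hs
  rw [hs]
  field_simp
  ring

theorem aestronglyMeasurable_chiSq {Ω : Type*} [MeasurableSpace Ω] {P : Measure Ω}
    {f : S → ℝ} (hf : Integrable (fun s => (f s - 1) ^ 2) ν) {Z : Ω → Lp ℝ 2 ν}
    (hZ : AEStronglyMeasurable Z P) {t : ℝ} (ht : t ≠ 0) {p : Ω → S → ℝ}
    (hp : ∀ ω, Z ω =ᵐ[ν] fun s => t * (p ω s - f s)) :
    AEStronglyMeasurable (fun ω => chiSq ν (p ω)) P := by
  borelize ↥(Lp ℝ 2 ν)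
  simp only [chiSq_eq_integral_add_div_sq ht (hp _)]
  exact ((measurable_integral_add_div_sq hf t).comp_aemeasurable
    hZ.aemeasurable).aestronglyMeasurable

theorem mem_mulMeasurableSubmodule_and_mul_chiSq_sub_chiSq_eq [IsFiniteMeasure ν] {f p : S → ℝ}
    (hf0 : ∀ᵐ s ∂ν, 0 ≤ f s) (hf1 : ∫⁻ s, ENNReal.ofReal (f s) ∂ν = 1)
    (hf : Integrable (fun s => (f s - 1) ^ 2) ν)
    (hp0 : ∀ᵐ s ∂ν, 0 ≤ p s) (hp1 : ∫⁻ s, ENNReal.ofReal (p s) ∂ν = 1)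
    (hp : Integrable (fun s => (p s - 1) ^ 2) ν)
    {t : ℝ} (ht : t ≠ 0) {z : Lp ℝ 2 ν} (hz : z =ᵐ[ν] fun s => t * (p s - f s)) :
    z ∈ mulMeasurableSubmodule f 2 ν ∧
      t * (chiSq ν p - chiSq ν f) = 2 * ∫ s, z s * f s ∂ν + ‖z‖ ^ 2 / t := by
  have hpz : (fun s => p s) =ᵐ[ν] fun s => f s + z s / t := by
    filter_upwards [hz] with s hs
    rw [hs]
    field_simp
    ring
  have hsq : (fun s => (p s - 1) ^ 2) =ᵐ[ν] fun s => (f s - 1 + z s / t) ^ 2 := by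
    filter_upwards [hpz] with s hs
    rw [hs]
    ring
  have hzV := mem_mulMeasurableSubmodule_of_integrable_add_div_sq hf.1 ht (hp.congr hsq)
  have hz0 : ∫ s, z s ∂ν = 0 := by
    have hlint : ∫⁻ s, ENNReal.ofReal (f s + z s / t) ∂ν = ∫⁻ s, ENNReal.ofReal (p s) ∂ν :=
      lintegral_congr_ae (hpz.mono fun s hs => congrArg ENNReal.ofReal hs.symm)
    have hzt := integral_eq_zero_of_lintegral_ofReal_add_eq hf0
      (by filter_upwards [hp0, hpz] with s hs hs' using hs' ▸ hs)
      (((Lp.memLp z).integrable one_le_two).div_const t)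
      (by rw [hlint, hp1, hf1])
      (by rw [hf1]; exact ENNReal.one_ne_top)
    rwa [integral_div, div_eq_zero_iff, or_iff_left ht] at hzt
  have hzf : ∫ s, z s * f s ∂ν = ∫ s, z s * (f s - 1) ∂ν := by
    rw [← add_zero (∫ s, z s * (f s - 1) ∂ν), ← hz0,
      ← integral_add (integrable_mul_of_mem_mulMeasurableSubmodule hf hzV)
        ((Lp.memLp z).integrable one_le_two)]
    congr 1 with s
    ring
  refine ⟨mulMeasurableSubmodule_sub_const f 1 2 ▸ hzV, ?_⟩
  rw [chiSq_eq_integral_add_div_sq ht hz, chiSq, integral_add_div_sq hf hzV, hzf]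
  field_simp
  ring

end ChiSq

theorem chisq_one_sample_alternative_general
    {S : Type*} [MeasurableSpace S] (ν : Measure S) [IsProbabilityMeasure ν]
    -- μ ≪ ν with density p_μ and χ²(μ‖ν) < ∞
    (μ : Measure S) [IsProbabilityMeasure μ] (pμ : S → ℝ) (hpμnn : ∀ s, 0 ≤ pμ s)
    (hμ : μ = ν.withDensity (fun s => ENNReal.ofReal (pμ s)))
    (hchisq : Integrable (fun s => (pμ s - 1) ^ 2) ν)
    {Ω : Type*} [MeasurableSpace Ω] (P : Measure Ω) [IsProbabilityMeasure P]
    -- the random probability measures μₙ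
    (ζ : ℕ → Ω → Measure S)
    (hζprob : ∀ n ω, IsProbabilityMeasure (ζ n ω))
    -- their densities with respect to ν
    (p : ℕ → Ω → S → ℝ)
    -- almost surely, for all n sufficiently large, μₙ ≪ ν with density p n and χ²(μₙ‖ν) < ∞
    (hdens : ∀ᵐ ω ∂P, ∀ᶠ n in atTop,
      ζ n ω = ν.withDensity (fun s => ENNReal.ofReal (p n ω s)) ∧
      (∀ᵐ s ∂ν, 0 ≤ p n ω s) ∧
      Integrable (fun s => (p n ω s - 1) ^ 2) ν)
    (r : ℕ → ℝ) (hrpos : ∀ n, 0 < r n) (hr : Tendsto r atTop atTop)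
    -- the L²(ν)-valued random elements rₙ (p_{μₙ} − p_μ)
    (Z : ℕ → Ω → Lp ℝ 2 ν) (B : Ω → Lp ℝ 2 ν)
    (hZmeas : ∀ n, AEStronglyMeasurable (Z n) P)
    (hBmeas : AEStronglyMeasurable B P)
    (hZrep : ∀ n ω, (Z n ω : S → ℝ) =ᵐ[ν] fun s => r n * (p n ω s - pμ s))
    (hW : WeakConv P Z B) :
    WeakConv P
      (fun n ω => r n * ((∫ s, (p n ω s - 1) ^ 2 ∂ν) - ∫ s, (pμ s - 1) ^ 2 ∂ν))
      (fun ω => 2 * ∫ s, (B ω : S → ℝ) s * pμ s ∂ν) := by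
  set V := mulMeasurableSubmodule pμ 2 ν
  obtain ⟨ψ, hψ⟩ := exists_inner_eq_integral_mul_of_integrable_sub_sq 1 hchisq
  have hgood : ∀ᵐ ω ∂P, ∀ᶠ n in atTop, Z n ω ∈ V ∧
      2 * inner ℝ ψ (Z n ω) + (r n)⁻¹ * ‖Z n ω‖ ^ 2
        = r n * (chiSq ν (p n ω) - chiSq ν pμ) := by
    filter_upwards [hdens] with ω hω
    filter_upwards [hω] with n ⟨hζ, hp0, hp⟩
    have := hζprob n ω
    obtain ⟨hV, hX⟩ := mem_mulMeasurableSubmodule_and_mul_chiSq_sub_chiSq_eq (ae_of_all _ hpμnn)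
      (lintegral_ofReal_eq_one_of_eq_withDensity hμ) hchisq hp0
      (lintegral_ofReal_eq_one_of_eq_withDensity hζ) hp (hrpos n).ne' (hZrep n ω)
    exact ⟨hV, by rw [hX, hψ _ hV, inv_mul_eq_div]⟩
  have hB : ∀ᵐ ω ∂P, B ω ∈ V := hW.ae_mem_of_ae_eventually_mem hZmeas hBmeas
    isClosed_mulMeasurableSubmodule (hgood.mono fun _ h => h.mono fun _ => And.left)
  have hU := hW.tendstoInDistribution_add_mul hZmeas hBmeas (φ := fun z => 2 * inner ℝ ψ z)
    (ρ := fun z => ‖z‖ ^ 2) (by fun_prop) (by fun_prop) (tendsto_inv_atTop_zero.comp hr)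
  have hX (n : ℕ) : AEMeasurable (fun ω => r n * (chiSq ν (p n ω) - chiSq ν pμ)) P :=
    ((AEStronglyMeasurable.aemeasurable (aestronglyMeasurable_chiSq hchisq (hZmeas n)
      (hrpos n).ne' (hZrep n))).sub_const _).const_mul _
  refine ((hU.of_ae_eventually_eq hX (hgood.mono fun _ h => h.mono fun _ => And.right)).congr
    (fun _ => .rfl) ?_).weakConv
  filter_upwards [hB] with ω hω
  simp [hψ _ hω]

/-- One-sample limit distribution for the χ² divergence under the alternative:
if `rₙ (p_{μₙ} − p_μ) →_w B` in `L²(ν)`, then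
`rₙ (χ²(μₙ‖ν) − χ²(μ‖ν)) →_d 2 ∫ B p_μ dν`. -/
theorem chisq_one_sample_alternative
    {S : Type*} [MeasurableSpace S] (ν : Measure S) [IsProbabilityMeasure ν]
    -- μ ≪ ν with density p_μ and χ²(μ‖ν) < ∞
    (μ : Measure S) [IsProbabilityMeasure μ] (pμ : S → ℝ) (hpμnn : ∀ s, 0 ≤ pμ s)
    (hμ : μ = ν.withDensity (fun s => ENNReal.ofReal (pμ s)))
    (hchisq : Integrable (fun s => (pμ s - 1) ^ 2) ν)
    {Ω : Type*} [MeasurableSpace Ω] (P : Measure Ω) [IsProbabilityMeasure P]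
    -- the random probability measures μₙ
    (ζ : ℕ → Ω → Measure S)
    (hζprob : ∀ n ω, IsProbabilityMeasure (ζ n ω))
    (hζmeas : ∀ n, ∀ C : Set S, MeasurableSet C → Measurable (fun ω => (ζ n ω C).toReal))
    -- their densities with respect to ν
    (p : ℕ → Ω → S → ℝ)
    -- almost surely, for all n sufficiently large, μₙ ≪ ν with density p n and χ²(μₙ‖ν) < ∞
    (hdens : ∀ᵐ ω ∂P, ∀ᶠ n in atTop,
      ζ n ω = ν.withDensity (fun s => ENNReal.ofReal (p n ω s)) ∧
      (∀ᵐ s ∂ν, 0 ≤ p n ω s) ∧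
      Integrable (fun s => (p n ω s - 1) ^ 2) ν)
    (r : ℕ → ℝ) (hrpos : ∀ n, 0 < r n) (hr : Tendsto r atTop atTop)
    -- the L²(ν)-valued random elements rₙ (p_{μₙ} − p_μ)
    (Z : ℕ → Ω → Lp ℝ 2 ν) (B : Ω → Lp ℝ 2 ν)
    (hZmeas : ∀ n, AEStronglyMeasurable (Z n) P)
    (hBmeas : AEStronglyMeasurable B P)
    (hZrep : ∀ n ω, (Z n ω : S → ℝ) =ᵐ[ν] fun s => r n * (p n ω s - pμ s))
    (hW : WeakConv P Z B) :
    WeakConv P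
      (fun n ω => r n * ((∫ s, (p n ω s - 1) ^ 2 ∂ν) - ∫ s, (pμ s - 1) ^ 2 ∂ν))
      (fun ω => 2 * ∫ s, (B ω : S → ℝ) s * pμ s ∂ν) :=
  chisq_one_sample_alternative_general ν μ pμ hpμnn hμ hchisq P ζ hζprob p hdens r hrpos hr Z B
    hZmeas hBmeas hZrep hW
end
end

section
/- Generalized Slutsky theorem in L^r spaces: Let ρ be a σ-finite measure and let r, r' ∈ [1,∞] be conjugate indices (1/r + 1/r' = 1). (i) If f_n → f in L^r(ρ) and g_n → g in L^{r'}(ρ), then f_n g_n → f g in L¹(ρ). (ii) If 1 < r < ∞ (so 1 < r' < ∞), Y_n are random elements of L^r(ρ) with Y_n →_w Y, and Z_n are random elements of L^{r'}(ρ) with Z_n →_w z for a deterministic z ∈ L^{r'}(ρ), then Y_n Z_n →_w Y z in L¹(ρ). -/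
/-!
By Hölder's inequality the pointwise product is a bounded bilinear map
`B : L^r × L^{r'} → L¹`; part (i) is its continuity. For part (ii), `B (Yₙ, z) →_w B (Y, z)` by the
continuous mapping theorem, while `‖B (Yₙ, Zₙ) - B (Yₙ, z)‖ ≤ ‖Yₙ‖ ‖Zₙ - z‖` tends to `0` in
probability: weak convergence makes `‖Yₙ‖` bounded in probability (portmanteau for closed sets), and
weak convergence to the constant `z` is convergence in probability. Finally, a perturbation that
vanishes in probability does not change a weak limit, as one sees by testing against bounded
Lipschitz functions.
-/

open MeasureTheory Filter Topology
open scoped ENNReal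

noncomputable section

open scoped NNReal

section Holder

variable {α 𝕜 E F G : Type*} {m : MeasurableSpace α} {μ : Measure α} {p q r : ℝ≥0∞}
  [ENNReal.HolderTriple p q r] [Fact (1 ≤ p)] [Fact (1 ≤ q)] [Fact (1 ≤ r)]
  [NontriviallyNormedField 𝕜] [NormedAddCommGroup E] [NormedAddCommGroup F]
  [NormedAddCommGroup G] [NormedSpace 𝕜 E] [NormedSpace 𝕜 F] [NormedSpace 𝕜 G]

theorem ContinuousLinearMap.tendsto_eLpNorm_bilin_sub (B : E →L[𝕜] F →L[𝕜] G)
    {fn : ℕ → α → E} {f : α → E} {gn : ℕ → α → F} {g : α → F}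
    (hfn : ∀ n, MemLp (fn n) p μ) (hf : MemLp f p μ) (hgn : ∀ n, MemLp (gn n) q μ)
    (hg : MemLp g q μ) (hfconv : Tendsto (fun n => eLpNorm (fn n - f) p μ) atTop (𝓝 0))
    (hgconv : Tendsto (fun n => eLpNorm (gn n - g) q μ) atTop (𝓝 0)) :
    Tendsto (fun n => eLpNorm (fun x => B (fn n x) (gn n x) - B (f x) (g x)) r μ)
      atTop (𝓝 0) := by
  have htoLp : ∀ {u : α → E} {v : α → F} (hu : MemLp u p μ) (hv : MemLp v q μ),
      B.holderL μ p q r (hu.toLp u) (hv.toLp v) = (B.memLp_of_bilin r hu hv).toLp _ := by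
    intro u v hu hv
    refine Lp.ext ((B.coeFn_holder _ _).trans ?_)
    filter_upwards [hu.coeFn_toLp, hv.coeFn_toLp, (B.memLp_of_bilin r hu hv).coeFn_toLp]
      with x hux hvx hx
    rw [hx, hux, hvx]
  rw [← Lp.tendsto_Lp_iff_tendsto_eLpNorm'' _ hfn _ hf] at hfconv
  rw [← Lp.tendsto_Lp_iff_tendsto_eLpNorm'' _ hgn _ hg] at hgconv
  have := ((B.holderL μ p q r).continuous₂.tendsto _).comp (hfconv.prodMk_nhds hgconv)
  simp only [Function.comp_def, Function.uncurry_apply_pair, htoLp] at this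
  exact (Lp.tendsto_Lp_iff_tendsto_eLpNorm'' _ (fun n => B.memLp_of_bilin r (hfn n) (hgn n)) _
    (B.memLp_of_bilin r hf hg)).1 this

end Holder

section InMeasure

variable {α ι E : Type*} {m : MeasurableSpace α} {μ : Measure α}

theorem tendstoInMeasure_zero_of_norm_le_mul [SeminormedAddCommGroup E] {l : Filter ι}
    {u : ι → α → E} {d : ι → α → ℝ} (K : ℝ≥0) (hd : TendstoInMeasure μ d l 0)
    (hu : ∀ i x, ‖u i x‖ ≤ K * d i x) : TendstoInMeasure μ u l 0 := by
  rw [tendstoInMeasure_iff_norm] at hd ⊢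
  intro ε hε
  refine tendsto_of_tendsto_of_tendsto_of_le_of_le tendsto_const_nhds
    (hd (ε / (K + 1)) (by positivity)) (fun _ => zero_le) fun i => measure_mono fun x hx => ?_
  have hux : ε ≤ ‖u i x‖ := by simpa using hx
  have hdx : ε ≤ (K + 1) * d i x := by nlinarith [hu i x, norm_nonneg (u i x), K.coe_nonneg]
  simp only [Set.mem_ofPred_eq, Pi.zero_apply, sub_zero, Real.norm_eq_abs]
  rw [div_le_iff₀' (by positivity)]
  exact hdx.trans (mul_le_mul_of_nonneg_left (le_abs_self _) (by positivity))

theorem TendstoInMeasure.tendsto_integral_of_norm_le [NormedAddCommGroup E] [NormedSpace ℝ E]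
    [IsFiniteMeasure μ] {f : ℕ → α → E} {g : α → E} (h : TendstoInMeasure μ f atTop g)
    (hf : ∀ n, AEStronglyMeasurable (f n) μ) (C : ℝ) (hC : ∀ n, ∀ᵐ x ∂μ, ‖f n x‖ ≤ C) :
    Tendsto (fun n => ∫ x, f n x ∂μ) atTop (𝓝 (∫ x, g x ∂μ)) := by
  refine tendsto_of_subseq_tendsto fun ns hns => ?_
  obtain ⟨ms, -, hms⟩ := (h.comp hns).exists_seq_tendsto_ae
  exact ⟨ms, tendsto_integral_of_dominated_convergence (fun _ => C) (fun n => hf _)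
    (integrable_const C) (fun n => hC _) hms⟩

theorem tendsto_measure_setOf_le_atTop [IsFiniteMeasure μ] {f : α → ℝ}
    (hf : AEMeasurable f μ) : Tendsto (fun M : ℝ => μ {x | M ≤ f x}) atTop (𝓝 0) := by
  have hempty : (⋂ M : ℝ, {x | M ≤ f x}) = ∅ :=
    Set.iInter_eq_empty_iff.2 fun x => ⟨f x + 1, by simp⟩
  simpa [Function.comp_def, hempty] using tendsto_measure_iInter_atTop
    (fun M => nullMeasurableSet_le aemeasurable_const hf)
    (fun M N hMN x (hx : N ≤ f x) => hMN.trans hx) ⟨0, measure_ne_top μ _⟩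

end InMeasure

section BoundedInProbability

variable {Ω E : Type*} [MeasurableSpace Ω] {P : Measure Ω}

def BoundedInProbability [Norm E] (P : Measure Ω) (X : ℕ → Ω → E) : Prop :=
  ∀ ε > 0, ∃ M : ℝ, ∀ᶠ n in atTop, P {ω | M ≤ ‖X n ω‖} ≤ ε

theorem BoundedInProbability.tendstoInMeasure_norm_mul_dist [SeminormedAddGroup E] {D : Type*}
    [PseudoMetricSpace D] {X : ℕ → Ω → E} {Y : ℕ → Ω → D} {L : Ω → D}
    (hX : BoundedInProbability P X) (hY : TendstoInMeasure P Y atTop L) :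
    TendstoInMeasure P (fun n ω => ‖X n ω‖ * dist (Y n ω) (L ω)) atTop 0 := by
  rw [tendstoInMeasure_iff_dist] at hY ⊢
  intro ε hε
  rw [ENNReal.tendsto_nhds_zero]
  intro η hη
  obtain ⟨M, hM⟩ := hX (η / 2) (ENNReal.half_pos hη.ne')
  set M' := max M 1
  have hM' : 0 < M' := lt_max_of_lt_right one_pos
  filter_upwards [hM, ENNReal.tendsto_nhds_zero.1 (hY (ε / M') (by positivity)) (η / 2)
    (ENNReal.half_pos hη.ne')] with n hXn hYn
  have hsub : {ω | ε ≤ dist (‖X n ω‖ * dist (Y n ω) (L ω)) 0} ⊆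
      {ω | M ≤ ‖X n ω‖} ∪ {ω | ε / M' ≤ dist (Y n ω) (L ω)} := by
    intro ω hω
    by_contra hnot
    simp only [Set.mem_union, Set.mem_ofPred_eq, not_or, not_le] at hnot hω
    rw [lt_div_iff₀ hM'] at hnot
    rw [Real.dist_0_eq_abs, abs_of_nonneg (by positivity)] at hω
    nlinarith [norm_nonneg (X n ω), dist_nonneg (x := Y n ω) (y := L ω), le_max_left M 1]
  calc P {ω | ε ≤ dist (‖X n ω‖ * dist (Y n ω) (L ω)) 0}
      ≤ P {ω | M ≤ ‖X n ω‖} + P {ω | ε / M' ≤ dist (Y n ω) (L ω)} :=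
        (measure_mono hsub).trans (measure_union_le _ _)
    _ ≤ η := by grw [hXn, hYn, ENNReal.add_halves]

theorem ContinuousLinearMap.tendstoInMeasure_dist_apply_apply {𝕜 E F G : Type*}
    [NontriviallyNormedField 𝕜] [SeminormedAddCommGroup E] [SeminormedAddCommGroup F]
    [SeminormedAddCommGroup G] [NormedSpace 𝕜 E] [NormedSpace 𝕜 F] [NormedSpace 𝕜 G]
    (B : E →L[𝕜] F →L[𝕜] G) {Y : ℕ → Ω → E} {Z : ℕ → Ω → F} {z : F}
    (hY : BoundedInProbability P Y) (hZ : TendstoInMeasure P Z atTop fun _ => z) :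
    TendstoInMeasure P (fun n ω => dist (B (Y n ω) (Z n ω)) (B (Y n ω) z)) atTop 0 :=
  tendstoInMeasure_zero_of_norm_le_mul ‖B‖₊ (hY.tendstoInMeasure_norm_mul_dist hZ) fun n ω => by
    rw [Real.norm_of_nonneg dist_nonneg, dist_eq_norm, ← map_sub, dist_eq_norm, coe_nnnorm,
      ← mul_assoc]
    exact B.le_opNorm₂ _ _

end BoundedInProbability

section WeakConv

variable {Ω D : Type*} [MeasurableSpace Ω] {P : Measure Ω}

theorem WeakConv.continuous_comp {D' : Type*} [TopologicalSpace D] [TopologicalSpace D']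
    {X : ℕ → Ω → D} {L : Ω → D} (h : WeakConv P X L) {φ : D → D'} (hφ : Continuous φ) :
    WeakConv P (fun n ω => φ (X n ω)) (fun ω => φ (L ω)) :=
  fun f => h (f.compContinuous ⟨φ, hφ⟩)

variable [IsProbabilityMeasure P]

theorem weakConv_iff_tendsto_map [TopologicalSpace D] [MeasurableSpace D]
    [OpensMeasurableSpace D] {X : ℕ → Ω → D} {L : Ω → D} (hX : ∀ n, AEMeasurable (X n) P)
    (hL : AEMeasurable L P) :
    WeakConv P X L ↔ Tendsto (β := ProbabilityMeasure D)
      (fun n => ⟨P.map (X n), Measure.isProbabilityMeasure_map (hX n)⟩) atTop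
      (𝓝 ⟨P.map L, Measure.isProbabilityMeasure_map hL⟩) := by
  refine Iff.trans ?_ ProbabilityMeasure.tendsto_iff_forall_integral_tendsto.symm
  refine forall_congr' fun f => ?_
  simp only [ProbabilityMeasure.coe_mk, integral_map (hX _) f.continuous.aestronglyMeasurable,
    integral_map hL f.continuous.aestronglyMeasurable]

variable [PseudoMetricSpace D] {X X' : ℕ → Ω → D} {L : Ω → D}

theorem WeakConv.limsup_measure_preimage_le (h : WeakConv P X L)
    (hX : ∀ n, AEStronglyMeasurable (X n) P) (hL : AEStronglyMeasurable L P) {F : Set D}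
    (hF : IsClosed F) : limsup (fun n => P (X n ⁻¹' F)) atTop ≤ P (L ⁻¹' F) := by
  borelize D
  have hX' n := (hX n).aemeasurable
  simpa [Measure.map_apply_of_aemeasurable, hX', hL.aemeasurable, hF.measurableSet] using
    ProbabilityMeasure.limsup_measure_closed_le_of_tendsto
      ((weakConv_iff_tendsto_map hX' hL.aemeasurable).1 h) hF

theorem WeakConv.tendstoInMeasure_const {c : D} (h : WeakConv P X fun _ => c)
    (hX : ∀ n, AEStronglyMeasurable (X n) P) : TendstoInMeasure P X atTop fun _ => c := by
  rw [tendstoInMeasure_iff_dist]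
  intro ε hε
  have hlimsup := h.limsup_measure_preimage_le hX aestronglyMeasurable_const
    (isClosed_le continuous_const (continuous_id.dist continuous_const) : IsClosed {y | ε ≤ dist y c})
  simp only [Set.preimage_const, Set.mem_ofPred_eq, dist_self, not_le.2 hε, if_false,
    measure_empty] at hlimsup
  exact tendsto_order.2 ⟨fun a ha => (not_lt_zero ha).elim,
    fun a ha => eventually_lt_of_limsup_lt (hlimsup.trans_lt ha)⟩

theorem WeakConv.boundedInProbability {E : Type*} [SeminormedAddCommGroup E]
    {Y : ℕ → Ω → E} {M : Ω → E} (h : WeakConv P Y M) (hY : ∀ n, AEStronglyMeasurable (Y n) P)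
    (hM : AEStronglyMeasurable M P) : BoundedInProbability P Y := by
  intro ε hε
  obtain ⟨R, hR⟩ := ((tendsto_measure_setOf_le_atTop hM.norm.aemeasurable).eventually_lt_const
    hε).exists
  exact ⟨R, (eventually_lt_of_limsup_lt ((h.limsup_measure_preimage_le hY hM
    (isClosed_le continuous_const continuous_norm)).trans_lt hR)).mono fun _ => le_of_lt⟩

theorem weakConv_iff_forall_lipschitz (hX : ∀ n, AEStronglyMeasurable (X n) P)
    (hL : AEStronglyMeasurable L P) :
    WeakConv P X L ↔ ∀ F : D → ℝ, (∃ C, ∀ x y, dist (F x) (F y) ≤ C) → (∃ K, LipschitzWith K F) →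
      Tendsto (fun n => ∫ ω, F (X n ω) ∂P) atTop (𝓝 (∫ ω, F (L ω) ∂P)) := by
  borelize D
  have hX' n := (hX n).aemeasurable
  refine (weakConv_iff_tendsto_map hX' hL.aemeasurable).trans
    (tendsto_iff_forall_lipschitz_integral_tendsto.trans ?_)
  refine forall_congr' fun F => forall_congr' fun _ => forall_congr' fun ⟨K, hK⟩ => ?_
  simp only [ProbabilityMeasure.coe_mk, integral_map (hX' _) hK.continuous.aestronglyMeasurable,
    integral_map hL.aemeasurable hK.continuous.aestronglyMeasurable]

-- The analogous `tendstoInDistribution_of_tendstoInMeasure_sub` assumes a second-countable space,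
-- which `Lp` need not be; a.e. strong measurability is enough here.
theorem WeakConv.of_tendstoInMeasure_dist (h : WeakConv P X L)
    (hd : TendstoInMeasure P (fun n ω => dist (X' n ω) (X n ω)) atTop 0)
    (hX : ∀ n, AEStronglyMeasurable (X n) P) (hX' : ∀ n, AEStronglyMeasurable (X' n) P)
    (hL : AEStronglyMeasurable L P) : WeakConv P X' L := by
  rw [weakConv_iff_forall_lipschitz hX' hL]
  rintro F ⟨C, hC⟩ ⟨K, hK⟩
  let F' : BoundedContinuousFunction D ℝ := .mkOfBound ⟨F, hK.continuous⟩ C hC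
  have hint {Y : Ω → D} (hY : AEStronglyMeasurable Y P) : Integrable (fun ω => F (Y ω)) P :=
    .of_bound (F'.continuous.comp_aestronglyMeasurable hY) ‖F'‖
      (ae_of_all _ fun ω => F'.norm_coe_le_norm _)
  have hsub : Tendsto (fun n => ∫ ω, (F (X' n ω) - F (X n ω)) ∂P) atTop (𝓝 0) := by
    have hin : TendstoInMeasure P (fun n ω => F (X' n ω) - F (X n ω)) atTop 0 :=
      tendstoInMeasure_zero_of_norm_le_mul K hd fun n ω => by
        simpa [← Real.dist_eq] using hK.dist_le_mul (X' n ω) (X n ω)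
    simpa using TendstoInMeasure.tendsto_integral_of_norm_le hin
      (fun n => ((hint (hX' n)).sub (hint (hX n))).1) C
      (fun n => ae_of_all _ fun ω => hC _ _)
  simpa [F', integral_sub (hint (hX' _)) (hint (hX _))] using hsub.add (h F')

end WeakConv

theorem generalized_slutsky_general
    {S : Type*} [MeasurableSpace S] (ρ : Measure S) :
    -- (i) deterministic part: for conjugate r, r' ∈ [1,∞],
    -- fₙ → f in L^r and gₙ → g in L^{r'} imply fₙ gₙ → f g in L¹.
    (∀ (r r' : ℝ≥0∞), 1 ≤ r → 1 ≤ r' → 1 / r + 1 / r' = 1 →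
      ∀ (fn : ℕ → S → ℝ) (f : S → ℝ) (gn : ℕ → S → ℝ) (g : S → ℝ),
        (∀ n, MemLp (fn n) r ρ) → MemLp f r ρ →
        (∀ n, MemLp (gn n) r' ρ) → MemLp g r' ρ →
        Tendsto (fun n => eLpNorm (fun s => fn n s - f s) r ρ) atTop (𝓝 0) →
        Tendsto (fun n => eLpNorm (fun s => gn n s - g s) r' ρ) atTop (𝓝 0) →
        Tendsto (fun n => eLpNorm (fun s => fn n s * gn n s - f s * g s) 1 ρ) atTop (𝓝 0))
    ∧
    -- (ii) stochastic part: for conjugate 1 < r, r' < ∞, if Yₙ →_w Y in L^r and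
    -- Zₙ →_w z in L^{r'} with z deterministic, then Yₙ Zₙ →_w Y z in L¹.
    (∀ (r r' : ℝ≥0∞), 1 < r → r < ⊤ → 1 < r' → r' < ⊤ → 1 / r + 1 / r' = 1 →
      ∀ (_hr : Fact (1 ≤ r)) (_hr' : Fact (1 ≤ r')),
      ∀ {Ω : Type} [MeasurableSpace Ω] (P : Measure Ω), IsProbabilityMeasure P →
      ∀ (Yn : ℕ → Ω → Lp ℝ r ρ) (Y : Ω → Lp ℝ r ρ) (Zn : ℕ → Ω → Lp ℝ r' ρ)
        (z : Lp ℝ r' ρ),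
        (∀ n, AEStronglyMeasurable (Yn n) P) → AEStronglyMeasurable Y P →
        (∀ n, AEStronglyMeasurable (Zn n) P) →
        WeakConv P Yn Y → WeakConv P Zn (fun _ => z) →
        -- the products Yₙ Zₙ and Y z, as L¹(ρ)-valued random elements
        ∀ (Wn : ℕ → Ω → Lp ℝ 1 ρ) (W : Ω → Lp ℝ 1 ρ),
          (∀ n ω, (Wn n ω : S → ℝ) =ᵐ[ρ] fun s => (Yn n ω : S → ℝ) s * (Zn n ω : S → ℝ) s) →
          (∀ ω, (W ω : S → ℝ) =ᵐ[ρ] fun s => (Y ω : S → ℝ) s * (z : S → ℝ) s) →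
          WeakConv P Wn W) := by
  have holderTriple {r r' : ℝ≥0∞} (h : 1 / r + 1 / r' = 1) : ENNReal.HolderTriple r r' 1 :=
    ⟨by simpa only [one_div, inv_one] using h⟩
  refine ⟨fun r r' hr hr' hrr' fn f gn g hfn hf hgn hg hfconv hgconv => ?_,
    fun r r' _ _ _ _ hrr' _ _ Ω _ P _ Yn Y Zn z hYn hY hZn hYconv hZconv Wn W hWn hW => ?_⟩
  · have := holderTriple hrr'
    have := Fact.mk hr
    have := Fact.mk hr'
    exact (ContinuousLinearMap.mul ℝ ℝ).tendsto_eLpNorm_bilin_sub hfn hf hgn hg hfconv hgconv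
  · have := holderTriple hrr'
    set B := (ContinuousLinearMap.mul ℝ ℝ).holderL ρ r r' 1
    have hB (y : Lp ℝ r ρ) (w : Lp ℝ r' ρ) : (B y w : S → ℝ) =ᵐ[ρ] fun s => y s * w s :=
      (ContinuousLinearMap.mul ℝ ℝ).coeFn_holder y w
    obtain rfl : Wn = fun n ω => B (Yn n ω) (Zn n ω) :=
      funext₂ fun n ω => Lp.ext ((hWn n ω).trans (hB _ _).symm)
    obtain rfl : W = fun ω => B (Y ω) z := funext fun ω => Lp.ext ((hW ω).trans (hB _ _).symm)
    have hBz := (B.flip z).continuous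
    exact (hYconv.continuous_comp hBz).of_tendstoInMeasure_dist
      (B.tendstoInMeasure_dist_apply_apply (hYconv.boundedInProbability hYn hY)
        (hZconv.tendstoInMeasure_const hZn))
      (fun n => hBz.comp_aestronglyMeasurable (hYn n))
      (fun n => B.aestronglyMeasurable_comp₂ (hYn n) (hZn n)) (hBz.comp_aestronglyMeasurable hY)

/-- Generalized Slutsky theorem in `L^r` spaces, parts (i) and (ii). -/
theorem generalized_slutsky
    {S : Type*} [MeasurableSpace S] (ρ : Measure S) [SigmaFinite ρ] :
    -- (i) deterministic part: for conjugate r, r' ∈ [1,∞],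
    -- fₙ → f in L^r and gₙ → g in L^{r'} imply fₙ gₙ → f g in L¹.
    (∀ (r r' : ℝ≥0∞), 1 ≤ r → 1 ≤ r' → 1 / r + 1 / r' = 1 →
      ∀ (fn : ℕ → S → ℝ) (f : S → ℝ) (gn : ℕ → S → ℝ) (g : S → ℝ),
        (∀ n, MemLp (fn n) r ρ) → MemLp f r ρ →
        (∀ n, MemLp (gn n) r' ρ) → MemLp g r' ρ →
        Tendsto (fun n => eLpNorm (fun s => fn n s - f s) r ρ) atTop (𝓝 0) →
        Tendsto (fun n => eLpNorm (fun s => gn n s - g s) r' ρ) atTop (𝓝 0) →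
        Tendsto (fun n => eLpNorm (fun s => fn n s * gn n s - f s * g s) 1 ρ) atTop (𝓝 0))
    ∧
    -- (ii) stochastic part: for conjugate 1 < r, r' < ∞, if Yₙ →_w Y in L^r and
    -- Zₙ →_w z in L^{r'} with z deterministic, then Yₙ Zₙ →_w Y z in L¹.
    (∀ (r r' : ℝ≥0∞), 1 < r → r < ⊤ → 1 < r' → r' < ⊤ → 1 / r + 1 / r' = 1 →
      ∀ (_hr : Fact (1 ≤ r)) (_hr' : Fact (1 ≤ r')),
      ∀ {Ω : Type} [MeasurableSpace Ω] (P : Measure Ω), IsProbabilityMeasure P →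
      ∀ (Yn : ℕ → Ω → Lp ℝ r ρ) (Y : Ω → Lp ℝ r ρ) (Zn : ℕ → Ω → Lp ℝ r' ρ)
        (z : Lp ℝ r' ρ),
        (∀ n, AEStronglyMeasurable (Yn n) P) → AEStronglyMeasurable Y P →
        (∀ n, AEStronglyMeasurable (Zn n) P) →
        WeakConv P Yn Y → WeakConv P Zn (fun _ => z) →
        -- the products Yₙ Zₙ and Y z, as L¹(ρ)-valued random elements
        ∀ (Wn : ℕ → Ω → Lp ℝ 1 ρ) (W : Ω → Lp ℝ 1 ρ),
          (∀ n ω, (Wn n ω : S → ℝ) =ᵐ[ρ] fun s => (Yn n ω : S → ℝ) s * (Zn n ω : S → ℝ) s) →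
          (∀ ω, (W ω : S → ℝ) =ᵐ[ρ] fun s => (Y ω : S → ℝ) s * (z : S → ℝ) s) →
          WeakConv P Wn W) :=
  generalized_slutsky_general ρ
end
end

section
/- Construction of local alternatives (Proposition on perturbed couplings, part (i)): Let π_0 be a Borel probability measure on ℝ^d × ℝ^d with marginals μ_0 ≠ ν_0, such that μ_0⊗ν_0 ≪ π_0, ν_0⊗μ_0 ≪ π_0, ‖d(ν_0⊗μ_0)/dπ_0‖_∞ < ∞, and, for a fixed constant c̄ > 0, the function h := c̄·(d(μ_0⊗ν_0)/dπ_0 − d(ν_0⊗μ_0)/dπ_0) satisfies ‖h‖_{L²(π_0)} < ∞. For each n, if 1 + n^{−1/2}h ≥ 0 π_0-a.s., let π_n be the measure with dπ_n/dπ_0 = 1 + n^{−1/2}h; otherwise set π_n = π_0. Then: (a) each π_n is a probability measure; (b) ∫ h dπ_0 = 0; (c) n·H²(π_n,π_0) → (1/4)‖h‖²_{L²(π_0)} as n → ∞; and (d) for every σ > 0, every x ∈ ℝ^d and every n with 1 + n^{−1/2}h ≥ 0 π_0-a.s., the marginals μ_n, ν_n of π_n satisfy n^{1/2}((μ_n*φ_σ)(x)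 − (μ_0*φ_σ)(x)) = E_{π_0}[h(X,Y)·φ_σ(x−X)] = c̄·((μ_0*φ_σ)(x) − (ν_0*φ_σ)(x)) and n^{1/2}((ν_n*φ_σ)(x) − (ν_0*φ_σ)(x)) = E_{π_0}[h(X,Y)·φ_σ(x−Y)] = c̄·((ν_0*φ_σ)(x) − (μ_0*φ_σ)(x)). -/
/-!
Since `μ₀ ⊗ ν₀` and `ν₀ ⊗ μ₀` have the same mass, `h` has `π₀`-mean zero, and for every bounded
`g`, `∫ h g dπ₀ = c̄ (∫ g d(μ₀ ⊗ ν₀) - ∫ g d(ν₀ ⊗ μ₀))`. The density `1 + n^{-1/2} h` is affine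
in `h`, so testing against `g = φ_σ(x - ·)` of either coordinate gives the marginal identities.
Because `d(ν₀ ⊗ μ₀)/dπ₀` is bounded, `h` is bounded below and `1 + n^{-1/2} h ≥ 0` for all large
`n`; then `n (√(1 + n^{-1/2} h) - 1)² → h² / 4` pointwise, dominated by `h² ∈ L¹`, which gives
the Hellinger asymptotics.
-/

open MeasureTheory Filter Topology
open scoped ENNReal

noncomputable section

/-- The density of the centered isotropic Gaussian `N(0, σ² I_d)` on `ℝ^d`. -/
def gaussDensity (d : ℕ) (σ : ℝ) (x : EuclideanSpace ℝ (Fin d)) : ℝ :=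
  (2 * Real.pi * σ ^ 2) ^ (-(d : ℝ) / 2) * Real.exp (-‖x‖ ^ 2 / (2 * σ ^ 2))

/-- The Lebesgue density of `m * γ_σ`: `(m*φ_σ)(x) = ∫ φ_σ(x−y) dm(y)`. -/
def smoothDensity (d : ℕ) (σ : ℝ) (m : Measure (EuclideanSpace ℝ (Fin d)))
    (x : EuclideanSpace ℝ (Fin d)) : ℝ :=
  ∫ y, gaussDensity d σ (x - y) ∂m

lemma sqrt_one_add_sub_one_eq_div {t : ℝ} (ht : 0 ≤ 1 + t) :
    √(1 + t) - 1 = t / (√(1 + t) + 1) := by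
  have hpos : 0 < √(1 + t) + 1 := by positivity
  rw [eq_div_iff hpos.ne']
  linear_combination Real.sq_sqrt ht

lemma sq_sqrt_one_add_sub_one_le (t : ℝ) : (√(1 + t) - 1) ^ 2 ≤ t ^ 2 := by
  rcases le_or_gt 0 (1 + t) with ht | ht
  · have hden : 1 ≤ √(1 + t) + 1 := by linarith [Real.sqrt_nonneg (1 + t)]
    rw [sqrt_one_add_sub_one_eq_div ht, div_pow]
    exact div_le_self (sq_nonneg t) (one_le_pow₀ hden)
  · rw [Real.sqrt_eq_zero_of_nonpos ht.le]
    nlinarith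

lemma tendsto_inv_sqrt_natCast_atTop : Tendsto (fun n : ℕ => (√n)⁻¹) atTop (𝓝 0) :=
  tendsto_inv_atTop_zero.comp (Real.tendsto_sqrt_atTop.comp tendsto_natCast_atTop_atTop)

lemma natCast_mul_sq_sqrt_one_add_sub_one_le (n : ℕ) (y : ℝ) :
    (n : ℝ) * (√(1 + (√n)⁻¹ * y) - 1) ^ 2 ≤ y ^ 2 := by
  have hn : (n : ℝ) * ((√n)⁻¹ * y) ^ 2 ≤ y ^ 2 := by
    rcases Nat.eq_zero_or_pos n with rfl | hn
    · simpa using sq_nonneg y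
    · rw [mul_pow, inv_pow, Real.sq_sqrt n.cast_nonneg, ← mul_assoc,
        mul_inv_cancel₀ (by positivity), one_mul]
  exact (mul_le_mul_of_nonneg_left (sq_sqrt_one_add_sub_one_le _) n.cast_nonneg).trans hn

lemma tendsto_natCast_mul_sq_sqrt_one_add_sub_one (y : ℝ) :
    Tendsto (fun n : ℕ => (n : ℝ) * (√(1 + (√n)⁻¹ * y) - 1) ^ 2) atTop (𝓝 ((y / 2) ^ 2)) := by
  have ht : Tendsto (fun n : ℕ => (√n)⁻¹ * y) atTop (𝓝 0) := by
    simpa using tendsto_inv_sqrt_natCast_atTop.mul_const y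
  have hcont : ContinuousAt (fun t : ℝ => (y / (√(1 + t) + 1)) ^ 2) 0 := by
    have : √(1 + 0) + 1 ≠ 0 := by norm_num
    fun_prop (disch := assumption)
  have hlim := hcont.tendsto.comp ht
  norm_num at hlim
  refine hlim.congr' ?_
  -- `√n (√(1 + y/√n) - 1) = y / (√(1 + y/√n) + 1)` once `1 + y/√n ≥ 0`
  have hev : ∀ᶠ n : ℕ in atTop, 1 ≤ n ∧ 0 ≤ 1 + (√n)⁻¹ * y :=
    (eventually_ge_atTop 1).and (ht.eventually (Ici_mem_nhds (by norm_num : (-1 : ℝ) < 0)) |>.mono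
      fun n hn => by linarith)
  filter_upwards [hev] with n ⟨hn, hpos⟩
  have hs : √(n : ℝ) ≠ 0 := by positivity
  simp only [Function.comp_apply]
  rw [sqrt_one_add_sub_one_eq_div hpos]
  field_simp
  rw [Real.sq_sqrt n.cast_nonneg]

section Perturbation

variable {Ω : Type*} [MeasurableSpace Ω] {π₀ : Measure Ω} {h : Ω → ℝ}

lemma eventually_ae_one_add_inv_sqrt_mul_nonneg {M : ℝ} (hlb : ∀ᵐ z ∂π₀, -M ≤ h z) :
    ∀ᶠ n : ℕ in atTop, ∀ᵐ z ∂π₀, 0 ≤ 1 + (√n)⁻¹ * h z := by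
  have hsmall : ∀ᶠ n : ℕ in atTop, (√n)⁻¹ * M ≤ 1 := by
    simpa using
      (tendsto_inv_sqrt_natCast_atTop.mul_const M).eventually (Iic_mem_nhds (by norm_num))
  filter_upwards [hsmall] with n hn
  filter_upwards [hlb] with z hz
  nlinarith [mul_le_mul_of_nonneg_left hz (inv_nonneg.2 (Real.sqrt_nonneg n))]

lemma isProbabilityMeasure_withDensity_one_add_mul [IsProbabilityMeasure π₀]
    (hh : Integrable h π₀) (hmean : ∫ z, h z ∂π₀ = 0) {t : ℝ}
    (hpos : ∀ᵐ z ∂π₀, 0 ≤ 1 + t * h z) :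
    IsProbabilityMeasure (π₀.withDensity fun z => ENNReal.ofReal (1 + t * h z)) := by
  have hi : Integrable (fun z => 1 + t * h z) π₀ := (integrable_const 1).add (hh.const_mul t)
  constructor
  rw [withDensity_apply _ MeasurableSet.univ, setLIntegral_univ,
    ← ofReal_integral_eq_lintegral_ofReal hi hpos,
    integral_add (integrable_const 1) (hh.const_mul t), integral_const_mul, hmean]
  simp

lemma integral_withDensity_one_add_mul [IsFiniteMeasure π₀] (hh : Integrable h π₀) {t : ℝ}
    (hpos : ∀ᵐ z ∂π₀, 0 ≤ 1 + t * h z) {g : Ω → ℝ} {K : ℝ} (hg : AEStronglyMeasurable g π₀)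
    (hgK : ∀ z, ‖g z‖ ≤ K) :
    ∫ z, g z ∂(π₀.withDensity fun z => ENNReal.ofReal (1 + t * h z))
      = ∫ z, g z ∂π₀ + t * ∫ z, h z * g z ∂π₀ := by
  have hhg : Integrable (fun z => h z * g z) π₀ := hh.mul_bdd hg (ae_of_all _ hgK)
  have hgi : Integrable g π₀ := (integrable_const K).mono' hg (ae_of_all _ hgK)
  have hhm := hh.aemeasurable
  rw [integral_withDensity_eq_integral_toReal_smul₀ (by fun_prop)
      (ae_of_all _ fun _ => ENNReal.ofReal_lt_top),
    ← integral_const_mul, ← integral_add hgi (hhg.const_mul t)]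
  refine integral_congr_ae ?_
  filter_upwards [hpos] with z hz
  rw [ENNReal.toReal_ofReal hz, smul_eq_mul]
  ring

lemma integral_sq_sqrt_rnDeriv_withDensity_sub_one [SigmaFinite π₀] (hh : AEMeasurable h π₀)
    {t : ℝ} (hpos : ∀ᵐ z ∂π₀, 0 ≤ 1 + t * h z) :
    ∫ z, (√(((π₀.withDensity fun z => ENNReal.ofReal (1 + t * h z)).rnDeriv π₀ z).toReal) - 1) ^ 2
        ∂π₀ = ∫ z, (√(1 + t * h z) - 1) ^ 2 ∂π₀ := by
  have hdens : AEMeasurable (fun z => ENNReal.ofReal (1 + t * h z)) π₀ := by fun_prop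
  refine integral_congr_ae ?_
  filter_upwards [Measure.rnDeriv_withDensity₀ π₀ hdens, hpos] with z hz hz'
  rw [hz, ENNReal.toReal_ofReal hz']

lemma tendsto_natCast_mul_integral_sq_sqrt_one_add_sub_one (hh : MemLp h 2 π₀) :
    Tendsto (fun n : ℕ => (n : ℝ) * ∫ z, (√(1 + (√n)⁻¹ * h z) - 1) ^ 2 ∂π₀)
      atTop (𝓝 ((1 / 4) * ∫ z, h z ^ 2 ∂π₀)) := by
  have hdct := tendsto_integral_of_dominated_convergence (μ := π₀) (fun z => h z ^ 2)
    (F := fun (n : ℕ) z => (n : ℝ) * (√(1 + (√n)⁻¹ * h z) - 1) ^ 2)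
    (fun n => Continuous.comp_aestronglyMeasurable
      (g := fun u => (n : ℝ) * (√(1 + (√n)⁻¹ * u) - 1) ^ 2) (by fun_prop) hh.1)
    hh.integrable_sq
    (fun n => ae_of_all _ fun z => by
      rw [Real.norm_of_nonneg (by positivity)]
      exact natCast_mul_sq_sqrt_one_add_sub_one_le n (h z))
    (ae_of_all _ fun z => tendsto_natCast_mul_sq_sqrt_one_add_sub_one (h z))
  have hlim : ∫ z, (h z / 2) ^ 2 ∂π₀ = (1 / 4) * ∫ z, h z ^ 2 ∂π₀ := by
    rw [← integral_const_mul]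
    congr 1 with z
    ring
  simpa only [integral_const_mul, hlim] using hdct

lemma ae_neg_mul_le_mul_toReal_rnDeriv_sub {α β : Measure Ω} {c : ℝ} (hc : 0 ≤ c) {C : ℝ≥0∞}
    (hC : C ≠ ⊤) (hβ : ∀ᵐ z ∂π₀, β.rnDeriv π₀ z ≤ C) :
    ∀ᵐ z ∂π₀, -(c * C.toReal) ≤ c * ((α.rnDeriv π₀ z).toReal - (β.rnDeriv π₀ z).toReal) := by
  filter_upwards [hβ] with z hz
  have hβC : (β.rnDeriv π₀ z).toReal ≤ C.toReal := ENNReal.toReal_mono hC hz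
  nlinarith [ENNReal.toReal_nonneg (a := α.rnDeriv π₀ z)]

lemma integral_toReal_rnDeriv_sub_mul [SigmaFinite π₀] {α β : Measure Ω} [IsFiniteMeasure α]
    [IsFiniteMeasure β] (hα : α ≪ π₀) (hβ : β ≪ π₀) {g : Ω → ℝ} {K : ℝ}
    (hg : AEStronglyMeasurable g π₀) (hgK : ∀ z, ‖g z‖ ≤ K) :
    ∫ z, ((α.rnDeriv π₀ z).toReal - (β.rnDeriv π₀ z).toReal) * g z ∂π₀
      = ∫ z, g z ∂α - ∫ z, g z ∂β := by
  simp only [sub_mul]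
  rw [integral_sub (Measure.integrable_toReal_rnDeriv.mul_bdd hg (ae_of_all _ hgK))
      (Measure.integrable_toReal_rnDeriv.mul_bdd hg (ae_of_all _ hgK)),
    ← integral_rnDeriv_smul hα, ← integral_rnDeriv_smul hβ]
  simp only [smul_eq_mul]

end Perturbation

section Gaussian

variable (d : ℕ) (σ : ℝ)

lemma continuous_gaussDensity : Continuous (gaussDensity d σ) := by
  unfold gaussDensity
  fun_prop

lemma norm_gaussDensity_le (x : EuclideanSpace ℝ (Fin d)) :
    ‖gaussDensity d σ x‖ ≤ (2 * Real.pi * σ ^ 2) ^ (-(d : ℝ) / 2) := by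
  have hK : 0 ≤ (2 * Real.pi * σ ^ 2) ^ (-(d : ℝ) / 2) := by positivity
  have hexp : Real.exp (-‖x‖ ^ 2 / (2 * σ ^ 2)) ≤ 1 :=
    Real.exp_le_one_iff.2 (div_nonpos_of_nonpos_of_nonneg (by simp) (by positivity))
  rw [gaussDensity, norm_mul, Real.norm_of_nonneg hK, Real.norm_of_nonneg (Real.exp_pos _).le]
  exact mul_le_of_le_one_right hK hexp

lemma smoothDensity_map {Ω : Type*} [MeasurableSpace Ω] (ρ : Measure Ω)
    {p : Ω → EuclideanSpace ℝ (Fin d)} (hp : AEMeasurable p ρ) (x : EuclideanSpace ℝ (Fin d)) :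
    smoothDensity d σ (ρ.map p) x = ∫ z, gaussDensity d σ (x - p z) ∂ρ :=
  integral_map hp ((continuous_gaussDensity d σ).comp (continuous_sub_left x)).aestronglyMeasurable

lemma smoothDensity_eq_integral_prod_fst (μ ν : Measure (EuclideanSpace ℝ (Fin d))) [SFinite μ]
    [IsProbabilityMeasure ν] (x : EuclideanSpace ℝ (Fin d)) :
    smoothDensity d σ μ x = ∫ z, gaussDensity d σ (x - z.1) ∂μ.prod ν := by
  simp [smoothDensity, integral_fun_fst (fun y => gaussDensity d σ (x - y))]

lemma smoothDensity_eq_integral_prod_snd (μ ν : Measure (EuclideanSpace ℝ (Fin d)))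
    [IsProbabilityMeasure μ] [SFinite ν] (x : EuclideanSpace ℝ (Fin d)) :
    smoothDensity d σ ν x = ∫ z, gaussDensity d σ (x - z.2) ∂μ.prod ν := by
  simp [smoothDensity, integral_fun_snd (fun y => gaussDensity d σ (x - y))]

lemma mul_smoothDensity_map_withDensity_sub {Ω : Type*} [MeasurableSpace Ω] {π₀ : Measure Ω}
    [IsFiniteMeasure π₀] {h : Ω → ℝ} (hh : Integrable h π₀) {t : ℝ} (ht : t ≠ 0)
    (hpos : ∀ᵐ z ∂π₀, 0 ≤ 1 + t⁻¹ * h z) {p : Ω → EuclideanSpace ℝ (Fin d)} (hp : Measurable p)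
    (x : EuclideanSpace ℝ (Fin d)) :
    t * (smoothDensity d σ ((π₀.withDensity fun z => ENNReal.ofReal (1 + t⁻¹ * h z)).map p) x
        - smoothDensity d σ (π₀.map p) x)
      = ∫ z, h z * gaussDensity d σ (x - p z) ∂π₀ := by
  have hg : Measurable fun z => gaussDensity d σ (x - p z) :=
    (continuous_gaussDensity d σ).measurable.comp (measurable_const.sub hp)
  rw [smoothDensity_map _ _ _ hp.aemeasurable, smoothDensity_map _ _ _ hp.aemeasurable,
    integral_withDensity_one_add_mul hh hpos hg.aestronglyMeasurable
      (fun z => norm_gaussDensity_le d σ _)]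
  field_simp
  ring

end Gaussian

theorem perturbed_coupling_construction_general
    (d : ℕ)
    (π₀ : Measure (EuclideanSpace ℝ (Fin d) × EuclideanSpace ℝ (Fin d)))
    [IsProbabilityMeasure π₀]
    -- the marginals μ₀ and ν₀ of π₀
    (μ₀ ν₀ : Measure (EuclideanSpace ℝ (Fin d)))
    (hμ₀ : μ₀ = π₀.map Prod.fst) (hν₀ : ν₀ = π₀.map Prod.snd)
    -- μ₀⊗ν₀ ≪ π₀ and ν₀⊗μ₀ ≪ π₀, with ‖d(ν₀⊗μ₀)/dπ₀‖_∞ < ∞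
    (hac₁ : μ₀.prod ν₀ ≪ π₀) (hac₂ : ν₀.prod μ₀ ≪ π₀)
    (hbdd : ∃ C : ℝ≥0∞, C < ⊤ ∧ ∀ᵐ z ∂π₀, (ν₀.prod μ₀).rnDeriv π₀ z ≤ C)
    -- the perturbation h = c̄ (d(μ₀⊗ν₀)/dπ₀ − d(ν₀⊗μ₀)/dπ₀), with ‖h‖_{L²(π₀)} < ∞
    (c : ℝ) (hc : 0 < c)
    (h : EuclideanSpace ℝ (Fin d) × EuclideanSpace ℝ (Fin d) → ℝ)
    (hdef : ∀ z, h z = c * (((μ₀.prod ν₀).rnDeriv π₀ z).toReal -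
      ((ν₀.prod μ₀).rnDeriv π₀ z).toReal))
    (hL2 : MemLp h 2 π₀)
    -- the perturbed couplings πₙ
    (π : ℕ → Measure (EuclideanSpace ℝ (Fin d) × EuclideanSpace ℝ (Fin d)))
    (hπ : ∀ n : ℕ,
      ((∀ᵐ z ∂π₀, 0 ≤ 1 + (Real.sqrt n)⁻¹ * h z) →
        π n = π₀.withDensity (fun z => ENNReal.ofReal (1 + (Real.sqrt n)⁻¹ * h z))) ∧
      ((¬ ∀ᵐ z ∂π₀, 0 ≤ 1 + (Real.sqrt n)⁻¹ * h z) → π n = π₀)) :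
    -- (a) each πₙ is a probability measure
    (∀ n, IsProbabilityMeasure (π n))
    ∧
    -- (b) ∫ h dπ₀ = 0
    (∫ z, h z ∂π₀ = 0)
    ∧
    -- (c) n H²(πₙ,π₀) → (1/4)‖h‖²_{L²(π₀)}
    (Tendsto (fun n : ℕ => (n : ℝ) *
        ∫ z, (Real.sqrt (((π n).rnDeriv π₀ z).toReal) - 1) ^ 2 ∂π₀)
      atTop (𝓝 ((1 / 4) * ∫ z, (h z) ^ 2 ∂π₀)))
    ∧
    -- (d) the perturbation identities for the smoothed marginals
    (∀ σ : ℝ, 0 < σ → ∀ x : EuclideanSpace ℝ (Fin d), ∀ n : ℕ, 1 ≤ n →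
      (∀ᵐ z ∂π₀, 0 ≤ 1 + (Real.sqrt n)⁻¹ * h z) →
      (Real.sqrt n * (smoothDensity d σ ((π n).map Prod.fst) x - smoothDensity d σ μ₀ x)
          = ∫ z, h z * gaussDensity d σ (x - z.1) ∂π₀ ∧
        (∫ z, h z * gaussDensity d σ (x - z.1) ∂π₀)
          = c * (smoothDensity d σ μ₀ x - smoothDensity d σ ν₀ x)) ∧
      (Real.sqrt n * (smoothDensity d σ ((π n).map Prod.snd) x - smoothDensity d σ ν₀ x)
          = ∫ z, h z * gaussDensity d σ (x - z.2) ∂π₀ ∧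
        (∫ z, h z * gaussDensity d σ (x - z.2) ∂π₀)
          = c * (smoothDensity d σ ν₀ x - smoothDensity d σ μ₀ x))) := by
  have : IsProbabilityMeasure μ₀ := hμ₀ ▸ Measure.isProbabilityMeasure_map (by fun_prop)
  have : IsProbabilityMeasure ν₀ := hν₀ ▸ Measure.isProbabilityMeasure_map (by fun_prop)
  have hweight : ∀ (g : _ → ℝ) (K : ℝ), Measurable g → (∀ z, ‖g z‖ ≤ K) →
      ∫ z, h z * g z ∂π₀ = c * (∫ z, g z ∂μ₀.prod ν₀ - ∫ z, g z ∂ν₀.prod μ₀) :=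
    fun g K hg hgK => by
      simp only [hdef, mul_assoc, integral_const_mul,
        integral_toReal_rnDeriv_sub_mul hac₁ hac₂ hg.aestronglyMeasurable hgK]
  have hint : Integrable h π₀ := hL2.integrable one_le_two
  have hmean : ∫ z, h z ∂π₀ = 0 := by
    simpa using hweight (fun _ => 1) 1 measurable_const (by simp)
  obtain ⟨C, hC, hCb⟩ := hbdd
  have hlb : ∀ᵐ z ∂π₀, -(c * C.toReal) ≤ h z := by
    simpa only [← hdef] using
      ae_neg_mul_le_mul_toReal_rnDeriv_sub (α := μ₀.prod ν₀) hc.le hC.ne hCb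
  refine ⟨fun n => ?_, hmean, ?_, ?_⟩
  · by_cases hpos : ∀ᵐ z ∂π₀, 0 ≤ 1 + (Real.sqrt n)⁻¹ * h z
    · exact (hπ n).1 hpos ▸ isProbabilityMeasure_withDensity_one_add_mul hint hmean hpos
    · exact (hπ n).2 hpos ▸ inferInstance
  · refine (tendsto_natCast_mul_integral_sq_sqrt_one_add_sub_one hL2).congr' ?_
    filter_upwards [eventually_ae_one_add_inv_sqrt_mul_nonneg hlb] with n hpos
    rw [(hπ n).1 hpos, integral_sq_sqrt_rnDeriv_withDensity_sub_one hint.aemeasurable hpos]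
  · intro σ _ x n hn hpos
    have hs : Real.sqrt n ≠ 0 := Real.sqrt_ne_zero'.2 (by exact_mod_cast hn)
    have hperturb := fun {p} (hp : Measurable p) =>
      (hπ n).1 hpos ▸ mul_smoothDensity_map_withDensity_sub d σ hint hs hpos hp x
    have hgauss := fun {p : _ → EuclideanSpace ℝ (Fin d)} (hp : Measurable p) =>
      hweight (fun z => gaussDensity d σ (x - p z)) _
        ((continuous_gaussDensity d σ).measurable.comp (measurable_const.sub hp))
        fun z => norm_gaussDensity_le d σ (x - p z)
    refine ⟨⟨hμ₀ ▸ hperturb measurable_fst, ?_⟩, hν₀ ▸ hperturb measurable_snd, ?_⟩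
    · rw [hgauss measurable_fst, ← smoothDensity_eq_integral_prod_fst,
        ← smoothDensity_eq_integral_prod_fst]
    · rw [hgauss measurable_snd, ← smoothDensity_eq_integral_prod_snd,
        ← smoothDensity_eq_integral_prod_snd]

/-- Construction of local alternatives: the perturbed couplings
`dπₙ/dπ₀ = 1 + n^{−1/2} h` (when nonnegative a.s., and `πₙ = π₀` otherwise) are probability
measures, `∫ h dπ₀ = 0`, `n H²(πₙ,π₀) → (1/4)‖h‖²`, and the smoothed marginals satisfy the
stated perturbation identities. -/
theorem perturbed_coupling_construction
    (d : ℕ)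
    (π₀ : Measure (EuclideanSpace ℝ (Fin d) × EuclideanSpace ℝ (Fin d)))
    [IsProbabilityMeasure π₀]
    -- the marginals μ₀ and ν₀ of π₀, with μ₀ ≠ ν₀
    (μ₀ ν₀ : Measure (EuclideanSpace ℝ (Fin d)))
    (hμ₀ : μ₀ = π₀.map Prod.fst) (hν₀ : ν₀ = π₀.map Prod.snd) (hne : μ₀ ≠ ν₀)
    -- μ₀⊗ν₀ ≪ π₀ and ν₀⊗μ₀ ≪ π₀, with ‖d(ν₀⊗μ₀)/dπ₀‖_∞ < ∞
    (hac₁ : μ₀.prod ν₀ ≪ π₀) (hac₂ : ν₀.prod μ₀ ≪ π₀)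
    (hbdd : ∃ C : ℝ≥0∞, C < ⊤ ∧ ∀ᵐ z ∂π₀, (ν₀.prod μ₀).rnDeriv π₀ z ≤ C)
    -- the perturbation h = c̄ (d(μ₀⊗ν₀)/dπ₀ − d(ν₀⊗μ₀)/dπ₀), with ‖h‖_{L²(π₀)} < ∞
    (c : ℝ) (hc : 0 < c)
    (h : EuclideanSpace ℝ (Fin d) × EuclideanSpace ℝ (Fin d) → ℝ)
    (hdef : ∀ z, h z = c * (((μ₀.prod ν₀).rnDeriv π₀ z).toReal -
      ((ν₀.prod μ₀).rnDeriv π₀ z).toReal))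
    (hL2 : MemLp h 2 π₀)
    -- the perturbed couplings πₙ
    (π : ℕ → Measure (EuclideanSpace ℝ (Fin d) × EuclideanSpace ℝ (Fin d)))
    (hπ : ∀ n : ℕ,
      ((∀ᵐ z ∂π₀, 0 ≤ 1 + (Real.sqrt n)⁻¹ * h z) →
        π n = π₀.withDensity (fun z => ENNReal.ofReal (1 + (Real.sqrt n)⁻¹ * h z))) ∧
      ((¬ ∀ᵐ z ∂π₀, 0 ≤ 1 + (Real.sqrt n)⁻¹ * h z) → π n = π₀)) :
    -- (a) each πₙ is a probability measure
    (∀ n, IsProbabilityMeasure (π n))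
    ∧
    -- (b) ∫ h dπ₀ = 0
    (∫ z, h z ∂π₀ = 0)
    ∧
    -- (c) n H²(πₙ,π₀) → (1/4)‖h‖²_{L²(π₀)}
    (Tendsto (fun n : ℕ => (n : ℝ) *
        ∫ z, (Real.sqrt (((π n).rnDeriv π₀ z).toReal) - 1) ^ 2 ∂π₀)
      atTop (𝓝 ((1 / 4) * ∫ z, (h z) ^ 2 ∂π₀)))
    ∧
    -- (d) the perturbation identities for the smoothed marginals
    (∀ σ : ℝ, 0 < σ → ∀ x : EuclideanSpace ℝ (Fin d), ∀ n : ℕ, 1 ≤ n →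
      (∀ᵐ z ∂π₀, 0 ≤ 1 + (Real.sqrt n)⁻¹ * h z) →
      (Real.sqrt n * (smoothDensity d σ ((π n).map Prod.fst) x - smoothDensity d σ μ₀ x)
          = ∫ z, h z * gaussDensity d σ (x - z.1) ∂π₀ ∧
        (∫ z, h z * gaussDensity d σ (x - z.1) ∂π₀)
          = c * (smoothDensity d σ μ₀ x - smoothDensity d σ ν₀ x)) ∧
      (Real.sqrt n * (smoothDensity d σ ((π n).map Prod.snd) x - smoothDensity d σ ν₀ x)
          = ∫ z, h z * gaussDensity d σ (x - z.2) ∂π₀ ∧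
        (∫ z, h z * gaussDensity d σ (x - z.2) ∂π₀)
          = c * (smoothDensity d σ ν₀ x - smoothDensity d σ μ₀ x))) :=
  perturbed_coupling_construction_general d π₀ μ₀ ν₀ hμ₀ hν₀ hac₁ hac₂ hbdd c hc h hdef hL2 π hπ
end
end
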